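/- arXiv:1206.2048 — 6 statements merged into one kernel-verified Lean document; each statement's English description precedes it below -/
import Mathlib

section
/- Assume (λ,λ̄,J,κ) is a pcf-case, μ = lim inf_J(λ̄), and 𝒫̄ = ⟨𝒫_α : α < λ⟩ is a (λ,μ,<λ)-system. Then there exists a sequence f̄ = ⟨f_α : α < λ⟩ which obeys (λ,λ̄,J,κ,𝒫̄). -/
/-!
Fix a witness `f'` for the pcf-case and put `f_α = f'_{τ α}` and
`g_a(i) = sup {f_β(i) + 1 : β ∈ a} + otp a` when `|a| < λ_i` (and `0` otherwise). The supremum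
gives (j); the order type grows strictly along proper initial segments, which gives (h), and by
regularity of `λ_i` both summands stay below `λ_i`. The index `τ α < λ` is chosen by recursion:
since `|𝒫_α| < λ` and every `g_a`, `a ∈ 𝒫_α`, lies in `∏ λ_i`, cofinality of `f'` and regularity
of `λ` give `τ α` above `α` and all earlier `τ β` with `g_a <_J f'_{τ α}`, which is (i) and keeps
`f' ∘ τ` increasing and cofinal.
-/

noncomputable section

open Cardinal Set Order

namespace PaperDefs

/-- `C` is a closed unbounded subset of the ordinal `δ`. -/
def IsClubIn (C : Set Ordinal) (δ : Ordinal.{0}) : Prop :=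
  C ⊆ Set.Iio δ ∧
  (∀ α < δ, ∃ β ∈ C, α < β) ∧
  (∀ α < δ, 0 < α → (∀ β < α, ∃ γ ∈ C, β < γ ∧ γ < α) → α ∈ C)

/-- `S` is a stationary subset of the ordinal `δ`. -/
def IsStationaryIn (S : Set Ordinal) (δ : Ordinal.{0}) : Prop :=
  ∀ C : Set Ordinal, IsClubIn C δ → (S ∩ C).Nonempty

/-- `S^λ_θ`, the set of ordinals below `λ` of cofinality `θ`. -/
def Scof (lam θ : Cardinal.{0}) : Set Ordinal :=
  {δ : Ordinal | δ < lam.ord ∧ δ.cof = θ}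

/-- Membership in the ideal `Ǐ_θ[λ]`. -/
def InIcheck (θ lam : Cardinal.{0}) (S : Set Ordinal) : Prop :=
  S ⊆ Scof lam θ ∧
  ∃ (a : Ordinal → Set Ordinal) (E : Set Ordinal),
    (∀ α : Ordinal, a α ⊆ Set.Iio α) ∧
    (∀ α : Ordinal, #(a α) < Cardinal.lift.{1} θ) ∧
    (∀ α β : Ordinal, β ∈ a α → a β = a α ∩ Set.Iio β) ∧
    IsClubIn E lam.ord ∧
    ∀ δ ∈ S ∩ E, ∃ e : Ordinal → Ordinal,
      StrictMonoOn e (Set.Iio θ.ord) ∧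
      (∀ ε < θ.ord, e ε < δ) ∧
      (∀ β < δ, ∃ ε < θ.ord, β < e ε) ∧
      (∀ ε < θ.ord, a (e ε) = e '' Set.Iio ε)

/-- The `γ`-th iterated cardinal successor `θ^{+γ}`. -/
def succIter (θ : Cardinal.{0}) (γ : Ordinal.{0}) : Cardinal.{0} :=
  Ordinal.limitRecOn γ θ (fun _ ih => Order.succ ih)
    (fun o _ ih => ⨆ i : (Set.Iio o), ih i.1 i.2)

/-- `J` is (the membership predicate of) a proper ideal on `ι` containing all singletons. -/
structure IsIdealOn {ι : Type*} (J : Set ι → Prop) : Prop where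
  empty_mem : J ∅
  mono : ∀ {s t : Set ι}, s ⊆ t → J t → J s
  union_mem : ∀ {s t : Set ι}, J s → J t → J (s ∪ t)
  singleton_mem : ∀ i : ι, J {i}
  proper : ¬ J Set.univ

/-- `f <_J g`. -/
def LtJ {ι : Type*} (J : Set ι → Prop) (f g : ι → Ordinal.{0}) : Prop :=
  J {i | ¬ f i < g i}

/-- The family `F` is `J`-free. -/
def FreeFam {ι : Type 1} (J : Set ι → Prop) (F : Set (ι → Ordinal.{0})) : Prop :=
  ∃ s : (ι → Ordinal.{0}) → Set ι,
    (∀ f ∈ F, J (s f)) ∧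
    ∀ f₁ ∈ F, ∀ f₂ ∈ F, f₁ ≠ f₂ → ∀ i, i ∉ s f₁ → i ∉ s f₂ → f₁ i ≠ f₂ i

/-- The family `F` is `(θ,J)`-free. -/
def FreeFamDeg {ι : Type 1} (J : Set ι → Prop) (θ : Cardinal.{0}) (F : Set (ι → Ordinal.{0})) : Prop :=
  ∀ F' ⊆ F, #F' < Cardinal.lift.{1} θ → FreeFam J F'

/-- The family `F` is `(θ₂,θ₁,J)`-free. -/
def FreeFamTwo {ι : Type 1} (J : Set ι → Prop) (θ₂ θ₁ : Cardinal.{0})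
    (F : Set (ι → Ordinal.{0})) : Prop :=
  ∀ F' ⊆ F, #F' < Cardinal.lift.{1} θ₂ →
    ∃ (P : Set (Set (ι → Ordinal.{0}))) (s : (ι → Ordinal.{0}) → Set ι),
      ⋃₀ P = F' ∧
      (∀ p ∈ P, ∀ q ∈ P, p ≠ q → Disjoint p q) ∧
      (∀ p ∈ P, #p < Cardinal.lift.{1} θ₁) ∧
      (∀ f ∈ F', J (s f)) ∧
      ∀ p₁ ∈ P, ∀ p₂ ∈ P, p₁ ≠ p₂ → ∀ f₁ ∈ p₁, ∀ f₂ ∈ p₂,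
        ∀ i, i ∉ s f₁ → i ∉ s f₂ → f₁ i ≠ f₂ i

/-- `J` is a `θ`-complete ideal: closed under unions of fewer than `θ` members. -/
def IdealComplete {ι : Type*} (J : Set ι → Prop) (θ : Cardinal.{0}) : Prop :=
  ∀ ε : Ordinal, ε < θ.ord → ∀ g : Ordinal → Set ι,
    (∀ i < ε, J (g i)) → J (⋃ i ∈ Set.Iio ε, g i)

/-- `comp(J) = sup {θ : J is θ-complete}`. -/
def IdealComp {ι : Type*} (J : Set ι → Prop) : Cardinal.{0} :=
  sSup {θ : Cardinal | IdealComplete J θ}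

/-- The canonical index type of size `κ`: the ordinals below `κ`. -/
abbrev KIdx (κ : Cardinal.{0}) : Type 1 := (Set.Iio κ.ord : Set Ordinal)

/-- `f̄ = ⟨f_α : α < λ⟩` is a `<_J`-increasing `<_J`-cofinal sequence in `∏_i λ_i`. -/
def IsPcfWitness {ι : Type 1} (J : Set ι → Prop) (lamb : ι → Cardinal.{0}) (lam : Cardinal.{0})
    (f : Ordinal.{0} → ι → Ordinal.{0}) : Prop :=
  (∀ α < lam.ord, ∀ i, f α i < (lamb i).ord) ∧
  (∀ α β : Ordinal, α < β → β < lam.ord → LtJ J (f α) (f β)) ∧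
  ∀ g : ι → Ordinal.{0}, (∀ i, g i < (lamb i).ord) → ∃ α < lam.ord, LtJ J g (f α)

/-- `(λ,λ̄,J,κ)` is a pcf-case. -/
def IsPcfCase (κ : Cardinal.{0}) (J : Set (KIdx κ) → Prop) (lamb : KIdx κ → Cardinal.{0})
    (lam : Cardinal.{0}) : Prop :=
  IsIdealOn J ∧ (∀ i, (lamb i).IsRegular ∧ κ < lamb i) ∧ lam.IsRegular ∧
    ∃ f : Ordinal → KIdx κ → Ordinal, IsPcfWitness J lamb lam f

/-- `μ = lim inf_J λ̄`: the least `χ` with `{i : λ_i < χ} ∉ J`. -/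
def IsLimInfJ {ι : Type 1} (J : Set ι → Prop) (lamb : ι → Cardinal.{0}) (μ : Cardinal.{0}) : Prop :=
  ¬ J {i | lamb i < μ} ∧ ∀ χ : Cardinal, χ < μ → J {i | lamb i < χ}

/-- `𝒫̄` is a `(λ,μ,<λ)`-system. -/
def IsSystem (lam μ : Cardinal.{0}) (P : Ordinal → Set (Set Ordinal)) : Prop :=
  (∀ α < lam.ord, ∀ a ∈ P α, a ⊆ Set.Iio α ∧ #a < Cardinal.lift.{1} μ) ∧
  (∀ α < lam.ord, ∀ a ∈ P α, ∀ β ∈ a, a ∩ Set.Iio β ∈ P β) ∧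
  ∀ α < lam.ord, #(P α) < Cardinal.lift.{1} lam

/-- `f̄` obeys `(λ,λ̄,J,κ,𝒫̄)`. -/
def Obeys {ι : Type 1} (J : Set ι → Prop) (lamb : ι → Cardinal.{0}) (lam : Cardinal.{0})
    (P : Ordinal → Set (Set Ordinal)) (f : Ordinal.{0} → ι → Ordinal.{0}) : Prop :=
  IsPcfWitness J lamb lam f ∧
  ∃ g : Set Ordinal → ι → Ordinal.{0},
    (∀ a b : Set Ordinal, (∃ α < lam.ord, a ∈ P α) → (∃ α < lam.ord, b ∈ P α) →
      (∃ γ : Ordinal, a = b ∩ Set.Iio γ) → a ≠ b →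
      ∀ i, #(b : Set Ordinal) < Cardinal.lift.{1} (lamb i) → g a i < g b i) ∧
    (∀ α < lam.ord, ∀ a ∈ P α, LtJ J (g a) (f α)) ∧
    ∀ α < lam.ord, ∀ a ∈ P α, ∀ β ∈ a, ∀ i,
      #(a : Set Ordinal) < Cardinal.lift.{1} (lamb i) → f β i < g a i

/-- `good''_θ(𝒫̄)`. -/
def GoodDblPrime (θ lam : Cardinal.{0}) (P : Ordinal → Set (Set Ordinal)) : Set Ordinal :=
  {δ : Ordinal | δ < lam.ord ∧ δ.cof = θ ∧ ∃ e : Ordinal → Ordinal,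
    StrictMonoOn e (Set.Iio θ.ord) ∧ (∀ ε < θ.ord, e ε < δ) ∧
    (∀ β < δ, ∃ ε < θ.ord, β < e ε) ∧
    ∀ ε < θ.ord, (e '' Set.Iio ε) ∈ P (e ε)}

/-- `δ` is a good (flat) point of `f̄` with respect to `J`. -/
def GoodPoint {ι : Type 1} (J : Set ι → Prop) (f : Ordinal.{0} → ι → Ordinal.{0})
    (δ : Ordinal.{0}) : Prop :=
  ∃ A : ι → Ordinal.{0} → Ordinal.{0},
    (∀ i, StrictMonoOn (A i) (Set.Iio δ.cof.ord)) ∧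
    (∀ α < δ, ∃ ε < δ.cof.ord, LtJ J (f α) (fun i => A i ε)) ∧
    ∀ ε < δ.cof.ord, ∃ α < δ, LtJ J (fun i => A i ε) (f α)

/-- `g` is a `<_J`-exact upper bound of `f̄ ↾ δ`. -/
def IsEub {ι : Type 1} (J : Set ι → Prop) (f : Ordinal.{0} → ι → Ordinal.{0}) (δ : Ordinal.{0})
    (g : ι → Ordinal.{0}) : Prop :=
  (∀ α < δ, LtJ J (f α) g) ∧ ∀ h : ι → Ordinal.{0}, LtJ J h g → ∃ α < δ, LtJ J h (f α)

/-- `δ` is a bad point: has an exact upper bound but is not good. -/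
def BadPoint {ι : Type 1} (J : Set ι → Prop) (f : Ordinal.{0} → ι → Ordinal.{0})
    (δ : Ordinal.{0}) : Prop :=
  (∃ g : ι → Ordinal.{0}, IsEub J f δ g) ∧ ¬ GoodPoint J f δ

/-- `δ` is strongly chaotic for `f̄`. -/
def SchPoint {ι : Type 1} (J : Set ι → Prop) (κ : Cardinal.{0})
    (f : Ordinal.{0} → ι → Ordinal.{0}) (δ : Ordinal.{0}) : Prop :=
  ∃ u : ι → Set Ordinal, (∀ i, #(u i) ≤ Cardinal.lift.{1} κ) ∧
    ∀ α < δ, ∃ g : ι → Ordinal.{0}, (∀ i, g i ∈ u i) ∧ ∃ β < δ, LtJ J (f α) g ∧ LtJ J g (f β)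

/-- `min((u ∪ {∞}) ∖ γ)`: the least element of `u` that is `≥ γ`, or `∞`. -/
def minAbove (u : Set Ordinal.{0}) (γ : Ordinal.{0}) : WithTop Ordinal :=
  haveI := Classical.propDecidable (∃ β ∈ u, γ ≤ β)
  if _ : ∃ β ∈ u, γ ≤ β then ((sInf {β | β ∈ u ∧ γ ≤ β} : Ordinal.{0}) : WithTop Ordinal) else ⊤

/-- `δ` is chaotic for `f̄`. -/
def ChPoint {ι : Type 1} (J : Set ι → Prop) (κ : Cardinal.{0})
    (f : Ordinal.{0} → ι → Ordinal.{0}) (δ : Ordinal.{0}) : Prop :=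
  ∃ u : ι → Set Ordinal, (∀ i, #(u i) ≤ Cardinal.lift.{1} κ) ∧
    ∀ α < δ, ∃ β : Ordinal, α < β ∧ β < δ ∧
      ¬ J {i | minAbove (u i) (f α i) < minAbove (u i) (f β i)}

/-- `f̄` is strongly-semi-`⟨θ,J⟩`-stable. -/
def StronglySemiStable {ι : Type 1} (J : Set ι → Prop) (θ : Cardinal.{0}) (lam : Ordinal.{0})
    (f : Ordinal.{0} → ι → Ordinal.{0}) : Prop :=
  ¬ ∃ (v u : Set Ordinal), v ⊆ Set.Iio lam ∧
    #v = Cardinal.lift.{1} θ ∧ #u < Cardinal.lift.{1} θ ∧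
    ∀ α ∈ v, ∀ β ∈ v, α < β →
      ¬ J {i | ¬ minAbove u (f α i) ≤ minAbove u (f β i)}

/-- `f̄` is strongly-semi-`(θ₂,θ₁,J)`-stable. -/
def StronglySemiStableRange {ι : Type 1} (J : Set ι → Prop) (θ₂ θ₁ : Cardinal.{0})
    (lam : Ordinal.{0}) (f : Ordinal.{0} → ι → Ordinal.{0}) : Prop :=
  ∀ θ : Cardinal, θ₁ ≤ θ → θ < θ₂ → StronglySemiStable J θ lam f

/-- `⟨f_α : α < α_*⟩` is a `(θ,J)`-free sequence. -/
def FreeSeq {ι : Type 1} (J : Set ι → Prop) (θ : Cardinal.{0})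
    (f : Ordinal.{0} → ι → Ordinal.{0}) (αstar : Ordinal.{0}) : Prop :=
  ∀ u : Set Ordinal, u ⊆ Set.Iio αstar → #u < Cardinal.lift.{1} θ →
    ∃ a : Ordinal → Set ι, (∀ α ∈ u, J (a α)) ∧
      ∀ α ∈ u, ∀ β ∈ u, α < β → ∀ i, i ∉ a α → i ∉ a β → f α i < f β i

end PaperDefs

namespace PaperDefs

open scoped Ordinal

theorem IsIdealOn.ltJ_trans {ι : Type*} {J : Set ι → Prop} (hJ : IsIdealOn J)
    {f g h : ι → Ordinal.{0}} (hfg : LtJ J f g) (hgh : LtJ J g h) : LtJ J f h :=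
  hJ.mono (fun i hi => by
    by_contra hne
    simp only [mem_union, mem_ofPred_eq, not_or, not_not] at hne
    exact hi (hne.1.trans hne.2)) (hJ.union_mem hfg hgh)

theorem typeLT_lt_of_eq_inter_Iio {a b : Set Ordinal.{0}} {γ : Ordinal}
    (hab : a = b ∩ Iio γ) (hne : a ≠ b) : typeLT a < typeLT b := by
  subst hab
  have hex : {x | x ∈ b ∧ γ ≤ x}.Nonempty := by
    by_contra h
    refine hne (inter_eq_left.2 fun x hx => ?_)
    by_contra hxγ
    exact h ⟨x, hx, not_lt.1 hxγ⟩
  obtain ⟨hβb, hγβ⟩ := csInf_mem hex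
  set β := sInf {x | x ∈ b ∧ γ ≤ x}
  refine PrincipalSeg.ordinal_type_lt
    ⟨Subrel.inclusionEmbedding (· < ·) inter_subset_left, ⟨β, hβb⟩, fun x => ⟨?_, fun hx => ?_⟩⟩
  · rintro ⟨y, rfl⟩
    exact (show y.1 < γ from y.2.2).trans_le hγβ
  · refine ⟨⟨x, x.2, ?_⟩, rfl⟩
    by_contra hxγ
    exact (not_le.2 (show x.1 < β from hx)) (csInf_le' ⟨x.2, not_lt.1 hxγ⟩)

/-- The order type of `a` as an `Ordinal.{0}`; a junk value unless `a` is small. -/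
def ordType (a : Set Ordinal.{0}) : Ordinal.{0} :=
  Function.invFun Ordinal.lift.{1} (typeLT a)

theorem lift_ordType {a : Set Ordinal.{0}} {c : Cardinal.{0}} (ha : #a ≤ Cardinal.lift.{1} c) :
    Ordinal.lift.{1} (ordType a) = typeLT a :=
  Function.invFun_eq (Ordinal.mem_range_lift_of_card_le (by rwa [Ordinal.card_type]))

theorem card_ordType {a : Set Ordinal.{0}} {c : Cardinal.{0}} (ha : #a ≤ Cardinal.lift.{1} c) :
    Cardinal.lift.{1} (ordType a).card = #a := by
  rw [Ordinal.lift_card, lift_ordType ha, Ordinal.card_type]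

/-- The paper's `g_a(i)` for the sequence `F`. -/
def obeyBound {ι : Type*} (lamb : ι → Cardinal.{0}) (F : Ordinal.{0} → ι → Ordinal.{0})
    (a : Set Ordinal.{0}) (i : ι) : Ordinal.{0} :=
  open Classical in
  if #a < Cardinal.lift.{1} (lamb i) then sSup ((fun β => F β i + 1) '' a) + ordType a else 0

section obeyBound

variable {ι : Type*} {lamb : ι → Cardinal.{0}} {F : Ordinal.{0} → ι → Ordinal.{0}}
  {a b : Set Ordinal.{0}} {i : ι}

theorem obeyBound_of_lt (ha : #a < Cardinal.lift.{1} (lamb i)) :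
    obeyBound lamb F a i = sSup ((fun β => F β i + 1) '' a) + ordType a :=
  if_pos ha

theorem obeyBound_congr {F' : Ordinal.{0} → ι → Ordinal.{0}} (h : ∀ β ∈ a, F β = F' β) :
    obeyBound lamb F a = obeyBound lamb F' a := by
  funext i
  have himage : (fun β => F β i + 1) '' a = (fun β => F' β i + 1) '' a :=
    image_congr fun β hβ => by rw [h β hβ]
  simp only [obeyBound, himage]

theorem obeyBound_lt_ord (hreg : (lamb i).IsRegular) (hF : ∀ β ∈ a, F β i < (lamb i).ord) :
    obeyBound lamb F a i < (lamb i).ord := by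
  by_cases ha : #a < Cardinal.lift.{1} (lamb i)
  · rw [obeyBound_of_lt ha]
    refine Ordinal.isPrincipal_add_ord hreg.aleph0_le ?_ ?_
    · rw [← image_image (· + 1) (fun β => F β i)]
      refine Ordinal.sSup_add_one_lt_of_lt_cof ?_ (by simpa using hF)
      rw [← Ordinal.lift_cof, hreg.cof_ord]
      exact mk_image_le.trans_lt ha
    · rw [Cardinal.lt_ord, ← Cardinal.lift_lt.{0, 1}, card_ordType ha.le]
      exact ha
  · rw [obeyBound, if_neg ha]
    exact hreg.ord_pos

theorem bddAbove_image_add_one (hF : ∀ β ∈ a, F β i < (lamb i).ord) :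
    BddAbove ((fun β => F β i + 1) '' a) :=
  ⟨(lamb i).ord, by
    rintro _ ⟨β, hβ, rfl⟩
    exact Order.add_one_le_of_lt (hF β hβ)⟩

theorem lt_obeyBound (ha : #a < Cardinal.lift.{1} (lamb i))
    (hF : ∀ β ∈ a, F β i < (lamb i).ord) {β : Ordinal} (hβ : β ∈ a) :
    F β i < obeyBound lamb F a i := by
  rw [obeyBound_of_lt ha]
  calc F β i < F β i + 1 := Order.lt_add_one_iff.2 le_rfl
    _ ≤ sSup ((fun β => F β i + 1) '' a) := le_csSup (bddAbove_image_add_one hF) ⟨β, hβ, rfl⟩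
    _ ≤ _ := le_self_add

theorem obeyBound_lt_obeyBound {γ : Ordinal} (hab : a = b ∩ Iio γ) (hne : a ≠ b)
    (hb : #b < Cardinal.lift.{1} (lamb i)) (hF : ∀ β ∈ b, F β i < (lamb i).ord) :
    obeyBound lamb F a i < obeyBound lamb F b i := by
  have hsub : a ⊆ b := hab ▸ inter_subset_left
  have ha : #a < Cardinal.lift.{1} (lamb i) := (mk_le_mk_of_subset hsub).trans_lt hb
  rw [obeyBound_of_lt ha, obeyBound_of_lt hb]
  have hsup := csSup_le_csSup' (bddAbove_image_add_one hF) (image_mono hsub)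
  have htype : ordType a < ordType b := by
    rw [← Ordinal.lift_lt.{1}, lift_ordType ha.le, lift_ordType hb.le]
    exact typeLT_lt_of_eq_inter_Iio hab hne
  exact (add_le_add_left hsup _).trans_lt (add_lt_add_right htype _)

end obeyBound

theorem exists_forall_of_step {X Y : Type*} [Preorder X] [WellFoundedLT X] [Nonempty Y]
    (R : X → (X → Y) → Y → Prop)
    (hloc : ∀ x t t' y, (∀ x' < x, t x' = t' x') → R x t y → R x t' y)
    (hstep : ∀ x t, (∀ x' < x, R x' t (t x')) → ∃ y, R x t y) :
    ∃ τ : X → Y, ∀ x, R x τ (τ x) := by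
  classical
  let τ : X → Y := wellFounded_lt.fix fun x ih =>
    Classical.epsilon (R x fun x' => if h : x' < x then ih x' h else Classical.arbitrary Y)
  refine ⟨τ, fun x => WellFoundedLT.induction (motive := fun x => R x τ (τ x)) x fun x IH => ?_⟩
  set t : X → Y := fun x' => if x' < x then τ x' else Classical.arbitrary Y
  have ht : ∀ x' < x, t x' = τ x' := fun x' h => if_pos h
  have hτ : τ x = Classical.epsilon (R x t) := WellFounded.fix_eq _ _ x
  rw [hτ]
  refine hloc x t τ _ ht (Classical.epsilon_spec (hstep x t fun x' hx' => ?_))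
  refine hloc x' τ t _ (fun x'' hx'' => (ht x'' (hx''.trans hx')).symm) ?_
  rw [ht x' hx']
  exact IH x' hx'

theorem exists_lt_ord_forall_lt {ι : Type 1} {c : Cardinal.{0}} (hc : c.IsRegular)
    (hι : #ι < Cardinal.lift.{1} c) {f : ι → Ordinal.{0}} (hf : ∀ x, f x < c.ord) :
    ∃ γ < c.ord, ∀ x, f x < γ := by
  refine ⟨⨆ x, f x + 1, Ordinal.lift_iSup_add_one_lt_of_lt_cof ?_ hf, fun x => ?_⟩
  · rwa [← Ordinal.lift_cof, hc.cof_ord, Cardinal.lift_uzero]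
  · have hbdd : BddAbove (range fun x => f x + 1) :=
      ⟨c.ord, by
        rintro _ ⟨y, rfl⟩
        exact Order.add_one_le_of_lt (hf y)⟩
    exact (Order.lt_add_one_iff.2 le_rfl).trans_le (le_ciSup hbdd x)

/-- `γ` is an admissible value of `τ α`, given the values of `τ` below `α`, in the recursive
construction of `f ∘ τ`; the condition is vacuous for `α ≥ λ`, so that `τ` is total. -/
def IsAdmissibleIndex {ι : Type 1} (J : Set ι → Prop) (lamb : ι → Cardinal.{0})
    (lam : Cardinal.{0}) (P : Ordinal → Set (Set Ordinal)) (f : Ordinal.{0} → ι → Ordinal.{0})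
    (α : Ordinal) (τ : Ordinal → Ordinal) (γ : Ordinal) : Prop :=
  α < lam.ord → α < γ ∧ γ < lam.ord ∧ (∀ β < α, τ β < γ) ∧
    ∀ a ∈ P α, LtJ J (obeyBound lamb (fun β => f (τ β)) a) (f γ)

section IsAdmissibleIndex

variable {ι : Type 1} {J : Set ι → Prop} {lamb : ι → Cardinal.{0}} {lam : Cardinal.{0}}
  {P : Ordinal → Set (Set Ordinal)} {f : Ordinal.{0} → ι → Ordinal.{0}}

theorem IsAdmissibleIndex.of_eqOn (hsub : ∀ α < lam.ord, ∀ a ∈ P α, a ⊆ Iio α)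
    {α γ : Ordinal} {τ τ' : Ordinal → Ordinal} (hτ : ∀ β < α, τ β = τ' β)
    (h : IsAdmissibleIndex J lamb lam P f α τ γ) : IsAdmissibleIndex J lamb lam P f α τ' γ := by
  intro hα
  obtain ⟨hαγ, hγ, hτγ, hJγ⟩ := h hα
  refine ⟨hαγ, hγ, fun β hβ => hτ β hβ ▸ hτγ β hβ, fun a ha => ?_⟩
  rw [obeyBound_congr (F' := fun β => f (τ β)) fun β hβ => by rw [hτ β (hsub α hα a ha hβ)]]
  exact hJγ a ha

theorem exists_isAdmissibleIndex (hJ : IsIdealOn J) (hlamb : ∀ i, (lamb i).IsRegular)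
    (hlam : lam.IsRegular) (hf : IsPcfWitness J lamb lam f)
    (hsub : ∀ α < lam.ord, ∀ a ∈ P α, a ⊆ Iio α)
    (hcard : ∀ α < lam.ord, #(P α) < Cardinal.lift.{1} lam) {α : Ordinal} (τ : Ordinal → Ordinal)
    (hτ : ∀ β < α, IsAdmissibleIndex J lamb lam P f β τ (τ β)) :
    ∃ γ, IsAdmissibleIndex J lamb lam P f α τ γ := by
  by_cases hα : α < lam.ord
  swap
  · exact ⟨0, fun h => absurd h hα⟩
  have hτlt : ∀ β < α, τ β < lam.ord := fun β hβ => (hτ β hβ (hβ.trans hα)).2.1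
  have hcofinal : ∀ a ∈ P α, ∃ δ < lam.ord, LtJ J (obeyBound lamb (fun β => f (τ β)) a) (f δ) :=
    fun a ha => hf.2.2 _ fun i => obeyBound_lt_ord (hlamb i) fun β hβ =>
      hf.1 _ (hτlt β (hsub α hα a ha hβ)) i
  choose δ hδ hJδ using hcofinal
  obtain ⟨γ₁, hγ₁, hτγ₁⟩ := exists_lt_ord_forall_lt hlam (ι := Iio α)
    (by rwa [Cardinal.mk_Iio_ordinal, Cardinal.lift_lt, ← Cardinal.lt_ord]) (f := fun β => τ β)
    fun β => hτlt β β.2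
  obtain ⟨γ₂, hγ₂, hδγ₂⟩ := exists_lt_ord_forall_lt hlam (ι := P α) (hcard α hα)
    (f := fun a => δ a.1 a.2) fun a => hδ _ _
  have hγ : max (α + 1) (max γ₁ γ₂) < lam.ord :=
    max_lt ((Cardinal.isSuccLimit_ord hlam.aleph0_le).add_one_lt hα) (max_lt hγ₁ hγ₂)
  refine ⟨max (α + 1) (max γ₁ γ₂), fun _ => ⟨?_, hγ, fun β hβ => ?_, fun a ha => ?_⟩⟩
  · exact (Order.lt_add_one_iff.2 le_rfl).trans_le (le_max_left _ _)
  · exact (hτγ₁ ⟨β, hβ⟩).trans_le ((le_max_left _ _).trans (le_max_right _ _))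
  · have hδ_lt : δ a ha < max (α + 1) (max γ₁ γ₂) :=
      (hδγ₂ ⟨a, ha⟩).trans_le ((le_max_right _ _).trans (le_max_right _ _))
    exact hJ.ltJ_trans (hJδ a ha) (hf.2.1 _ _ hδ_lt hγ)

theorem obeys_of_isAdmissibleIndex (hJ : IsIdealOn J) (hf : IsPcfWitness J lamb lam f)
    (hsub : ∀ α < lam.ord, ∀ a ∈ P α, a ⊆ Iio α) {τ : Ordinal → Ordinal}
    (hτ : ∀ α, IsAdmissibleIndex J lamb lam P f α τ (τ α)) :
    Obeys J lamb lam P fun α => f (τ α) := by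
  have hflt : ∀ β < lam.ord, ∀ i, f (τ β) i < (lamb i).ord := fun β hβ => hf.1 _ (hτ β hβ).2.1
  have hfa : ∀ α < lam.ord, ∀ a ∈ P α, ∀ i, ∀ β ∈ a, f (τ β) i < (lamb i).ord :=
    fun α hα a ha i β hβ => hflt β ((hsub α hα a ha hβ).trans hα) i
  refine ⟨⟨hflt, fun α β hαβ hβ => hf.2.1 _ _ ((hτ β hβ).2.2.1 α hαβ) (hτ β hβ).2.1,
    fun g hg => ?_⟩, obeyBound lamb fun β => f (τ β), ?_, fun α hα => (hτ α hα).2.2.2, ?_⟩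
  · obtain ⟨δ, hδ, hgδ⟩ := hf.2.2 g hg
    exact ⟨δ, hδ, hJ.ltJ_trans hgδ (hf.2.1 _ _ (hτ δ hδ).1 (hτ δ hδ).2.1)⟩
  · rintro a b - ⟨αb, hαb, hb⟩ ⟨γ, hab⟩ hne i hbi
    exact obeyBound_lt_obeyBound hab hne hbi (hfa αb hαb b hb i)
  · intro α hα a ha β hβ i hai
    exact lt_obeyBound hai (hfa α hα a ha i) hβ

end IsAdmissibleIndex

theorem statement7_general (κ lam μ : Cardinal.{0}) (J : Set (KIdx κ) → Prop)
    (lamb : KIdx κ → Cardinal.{0}) (P : Ordinal → Set (Set Ordinal))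
    (hpcf : IsPcfCase κ J lamb lam)
    (hP : IsSystem lam μ P) :
    ∃ f : Ordinal → KIdx κ → Ordinal, Obeys J lamb lam P f := by
  obtain ⟨hJ, hlamb, hlam, f, hf⟩ := hpcf
  have hsub : ∀ α < lam.ord, ∀ a ∈ P α, a ⊆ Iio α := fun α hα a ha => (hP.1 α hα a ha).1
  obtain ⟨τ, hτ⟩ := exists_forall_of_step (IsAdmissibleIndex J lamb lam P f)
    (fun _ _ _ _ => IsAdmissibleIndex.of_eqOn hsub)
    (fun _ τ => exists_isAdmissibleIndex hJ (fun i => (hlamb i).1) hlam hf hsub hP.2.2 τ)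
  exact ⟨_, obeys_of_isAdmissibleIndex hJ hf hsub hτ⟩

/-- existence of an obeying sequence for a pcf-case. -/
theorem statement7 (κ lam μ : Cardinal.{0}) (J : Set (KIdx κ) → Prop)
    (lamb : KIdx κ → Cardinal.{0}) (P : Ordinal → Set (Set Ordinal))
    (hpcf : IsPcfCase κ J lamb lam)
    (hμ : IsLimInfJ J lamb μ)
    (hP : IsSystem lam μ P) :
    ∃ f : Ordinal → KIdx κ → Ordinal, Obeys J lamb lam P f :=
  statement7_general κ lam μ J lamb P hpcf hP

end PaperDefs
end
end

section
/- Assume (λ,λ̄,J,κ) is a pcf-case, μ = lim inf_J(λ̄), 𝒫̄ is a (λ,μ,<λ)-system, f̄ = ⟨f_α : α < λ⟩ obeys (λ,λ̄,J,κ,𝒫̄), and θ is a regular cardinal with κ < θ < lim inf_J(λ̄). Then good''_θ(𝒫̄) ⊆ S_gd[f̄,J], i.e. every δ ∈ good''_θ(𝒫̄) is good (flat) for f̄. -/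
/-! Let `e : θ → δ` be the cofinal chain with `e '' ε ∈ 𝒫_{e ε}` and put
`A_{i,ε} = g_{e '' ε}(i)`. For the `i` with `λ_i ≥ θ` (all but a `J`-small set, since
`θ < lim inf_J λ̄`) the sets `e '' ε` have size `< λ_i`, so the clauses of `Obeys` apply:
`A_{i,ε}` increases with `ε` because the `e '' ε` are initial segments of each other,
`A_ε <_J f_{e ε}`, and `f_{e ε} < A_{ε+1}` because `e ε ∈ e '' (ε+1)`. As `θ` is a limit, the
`A_ε` interleave with `f̄ ↾ δ`. -/

noncomputable section

open Cardinal Set Order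

section InitialSegments

variable {α β : Type*} [LinearOrder α] [LinearOrder β] {e : α → β} {o ε ζ : α}

theorem StrictMonoOn.image_Iio_eq_image_Iio_inter (he : StrictMonoOn e (Iio o))
    (hεζ : ε < ζ) (hζ : ζ ≤ o) : e '' Iio ε = e '' Iio ζ ∩ Iio (e ε) := by
  have hε : ε ∈ Iio o := hεζ.trans_le hζ
  ext x
  constructor
  · rintro ⟨η, hη, rfl⟩
    exact ⟨⟨η, hη.trans hεζ, rfl⟩, he (hη.trans hε) hε hη⟩
  · rintro ⟨⟨η, hη, rfl⟩, hlt⟩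
    exact ⟨η, (he.lt_iff_lt (hη.trans_le hζ) hε).1 hlt, rfl⟩

theorem StrictMonoOn.image_Iio_ne_image_Iio (he : StrictMonoOn e (Iio o))
    (hεζ : ε < ζ) (hζ : ζ ≤ o) : e '' Iio ε ≠ e '' Iio ζ := by
  intro h
  have hmem : e ε ∈ e '' Iio ζ ∩ Iio (e ε) := by
    rw [← he.image_Iio_eq_image_Iio_inter hεζ hζ, h]
    exact mem_image_of_mem e hεζ
  exact lt_irrefl _ hmem.2

end InitialSegments

namespace PaperDefs

section Ideal

variable {ι : Type*} {J : Set ι → Prop}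

theorem IsIdealOn.ltJ_of_forall_notMem (hJ : IsIdealOn J) {s : Set ι} {u v : ι → Ordinal}
    (hs : J s) (h : ∀ i ∉ s, u i < v i) : LtJ J u v :=
  hJ.mono (fun i hi => by_contra fun his => hi (h i his)) hs

end Ideal

theorem mk_image_Iio_lt_lift {c : Cardinal.{0}} {ζ : Ordinal.{0}} (hζ : ζ < c.ord)
    (e : Ordinal.{0} → Ordinal.{0}) : #(e '' Iio ζ) < Cardinal.lift.{1} c :=
  calc #(e '' Iio ζ) ≤ #(Iio ζ) := mk_image_le
    _ = Cardinal.lift.{1} ζ.card := mk_Iio_ordinal ζ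
    _ < Cardinal.lift.{1} c := lift_lt.2 (lt_ord.1 hζ)

/-- The conditions on the family `⟨g_a⟩` in `Obeys`. -/
structure IsObeyFamily {ι : Type 1} (J : Set ι → Prop) (lamb : ι → Cardinal.{0})
    (lam : Cardinal.{0}) (P : Ordinal → Set (Set Ordinal))
    (f : Ordinal.{0} → ι → Ordinal.{0}) (g : Set Ordinal → ι → Ordinal.{0}) : Prop where
  lt_of_initialSeg : ∀ a b : Set Ordinal, (∃ α < lam.ord, a ∈ P α) →
    (∃ α < lam.ord, b ∈ P α) → (∃ γ : Ordinal, a = b ∩ Set.Iio γ) → a ≠ b →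
    ∀ i, #(b : Set Ordinal) < Cardinal.lift.{1} (lamb i) → g a i < g b i
  ltJ_apply : ∀ α < lam.ord, ∀ a ∈ P α, LtJ J (g a) (f α)
  apply_lt : ∀ α < lam.ord, ∀ a ∈ P α, ∀ β ∈ a, ∀ i,
    #(a : Set Ordinal) < Cardinal.lift.{1} (lamb i) → f β i < g a i

section Approx

variable {ι : Type 1} {J : Set ι → Prop} {lamb : ι → Cardinal.{0}} {lam θ : Cardinal.{0}}
  {P : Ordinal → Set (Set Ordinal)} {f : Ordinal.{0} → ι → Ordinal.{0}}
  {g : Set Ordinal → ι → Ordinal.{0}} {e : Ordinal.{0} → Ordinal.{0}}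

/-- On the `J`-small set where `λ_i < θ`, `|e '' ε|` may be too large for the monotonicity
clause of `g`, and any increasing values do. -/
def approxSeq (lamb : ι → Cardinal.{0}) (θ : Cardinal.{0})
    (g : Set Ordinal → ι → Ordinal.{0}) (e : Ordinal.{0} → Ordinal.{0}) (i : ι)
    (ε : Ordinal.{0}) : Ordinal.{0} :=
  if lamb i < θ then ε else g (e '' Iio ε) i

theorem approxSeq_of_not_lt {i : ι} (hi : ¬ lamb i < θ) (ε : Ordinal.{0}) :
    approxSeq lamb θ g e i ε = g (e '' Iio ε) i :=
  if_neg hi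

theorem approxSeq_strictMonoOn (hg : IsObeyFamily J lamb lam P f g)
    (he : StrictMonoOn e (Iio θ.ord)) (helam : ∀ ε < θ.ord, e ε < lam.ord)
    (heP : ∀ ε < θ.ord, e '' Iio ε ∈ P (e ε)) (i : ι) :
    StrictMonoOn (approxSeq lamb θ g e i) (Iio θ.ord) := by
  intro ε hε ζ hζ hεζ
  by_cases hi : lamb i < θ
  · simpa only [approxSeq, hi, if_true] using hεζ
  · rw [approxSeq_of_not_lt hi, approxSeq_of_not_lt hi]
    exact hg.lt_of_initialSeg _ _ ⟨e ε, helam ε hε, heP ε hε⟩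
      ⟨e ζ, helam ζ hζ, heP ζ hζ⟩ ⟨e ε, he.image_Iio_eq_image_Iio_inter hεζ hζ.le⟩
      (he.image_Iio_ne_image_Iio hεζ hζ.le) i
      (mk_image_Iio_lt_lift (hζ.trans_le (ord_le_ord.2 (not_lt.1 hi))) e)

theorem ltJ_approxSeq (hJ : IsIdealOn J) (hsmall : J {i | lamb i < θ})
    (hf : IsPcfWitness J lamb lam f) (hg : IsObeyFamily J lamb lam P f g)
    (helam : ∀ ε < θ.ord, e ε < lam.ord) (heP : ∀ ε < θ.ord, e '' Iio ε ∈ P (e ε))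
    {α ε ζ : Ordinal.{0}} (hα : α < e ε) (hεζ : ε < ζ) (hζ : ζ < θ.ord) :
    LtJ J (f α) (fun i => approxSeq lamb θ g e i ζ) := by
  refine hJ.ltJ_of_forall_notMem
    (hJ.union_mem (hf.2.1 α (e ε) hα (helam ε (hεζ.trans hζ))) hsmall) fun i hi => ?_
  obtain ⟨hαε, hi⟩ := not_or.1 hi
  rw [approxSeq_of_not_lt hi]
  calc f α i < f (e ε) i := of_not_not hαε
    _ < g (e '' Iio ζ) i := hg.apply_lt _ (helam ζ hζ) _ (heP ζ hζ) _ ⟨ε, hεζ, rfl⟩ i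
        (mk_image_Iio_lt_lift (hζ.trans_le (ord_le_ord.2 (not_lt.1 hi))) e)

theorem approxSeq_ltJ (hJ : IsIdealOn J) (hsmall : J {i | lamb i < θ})
    (hg : IsObeyFamily J lamb lam P f g) (helam : ∀ ε < θ.ord, e ε < lam.ord)
    (heP : ∀ ε < θ.ord, e '' Iio ε ∈ P (e ε)) {ε : Ordinal.{0}} (hε : ε < θ.ord) :
    LtJ J (fun i => approxSeq lamb θ g e i ε) (f (e ε)) := by
  refine hJ.ltJ_of_forall_notMem
    (hJ.union_mem (hg.ltJ_apply _ (helam ε hε) _ (heP ε hε)) hsmall) fun i hi => ?_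
  obtain ⟨hlt, hi⟩ := not_or.1 hi
  rw [approxSeq_of_not_lt hi]
  exact of_not_not hlt

end Approx

theorem statement9_general (κ lam μ θ : Cardinal.{0}) (J : Set (KIdx κ) → Prop)
    (lamb : KIdx κ → Cardinal.{0}) (P : Ordinal → Set (Set Ordinal))
    (f : Ordinal → KIdx κ → Ordinal)
    (hpcf : IsPcfCase κ J lamb lam)
    (hμ : IsLimInfJ J lamb μ)
    (hf : Obeys J lamb lam P f)
    (hθ : θ.IsRegular) (hθμ : θ < μ) :
    ∀ δ ∈ GoodDblPrime θ lam P, GoodPoint J f δ := by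
  obtain ⟨hJ, -⟩ := hpcf
  obtain ⟨hwit, g, hg_lt, hg_ltJ, hg_apply⟩ := hf
  have hg : IsObeyFamily J lamb lam P f g := ⟨hg_lt, hg_ltJ, hg_apply⟩
  have hsmall : J {i | lamb i < θ} := hμ.2 θ hθμ
  rintro δ ⟨hδlam, hδcof, e, he, heδ, hecof, heP⟩
  have helam : ∀ ε < θ.ord, e ε < lam.ord := fun ε hε => (heδ ε hε).trans hδlam
  rw [GoodPoint, hδcof]
  refine ⟨approxSeq lamb θ g e, approxSeq_strictMonoOn hg he helam heP, fun α hα => ?_,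
    fun ε hε => ⟨e ε, heδ ε hε, approxSeq_ltJ hJ hsmall hg helam heP hε⟩⟩
  obtain ⟨ε, hε, hαε⟩ := hecof α hα
  have hε1 : ε + 1 < θ.ord := (isSuccLimit_ord hθ.aleph0_le).succ_lt hε
  exact ⟨ε + 1, hε1, ltJ_approxSeq hJ hsmall hwit hg helam heP hαε (lt_add_one ε) hε1⟩

/-- if `f̄` obeys `(λ,λ̄,J,κ,𝒫̄)` and `κ < θ < lim inf_J(λ̄)` is regular
then `good''_θ(𝒫̄) ⊆ S_gd[f̄,J]`. -/
theorem statement9 (κ lam μ θ : Cardinal.{0}) (J : Set (KIdx κ) → Prop)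
    (lamb : KIdx κ → Cardinal.{0}) (P : Ordinal → Set (Set Ordinal))
    (f : Ordinal → KIdx κ → Ordinal)
    (hpcf : IsPcfCase κ J lamb lam)
    (hμ : IsLimInfJ J lamb μ)
    (hP : IsSystem lam μ P)
    (hf : Obeys J lamb lam P f)
    (hθ : θ.IsRegular) (hκθ : κ < θ) (hθμ : θ < μ) :
    ∀ δ ∈ GoodDblPrime θ lam P, GoodPoint J f δ :=
  statement9_general κ lam μ θ J lamb P f hpcf hμ hf hθ hθμ

end PaperDefs
end
end

section
/- Let J be an ideal on a cardinal κ and let θ₁ ≤ θ₂ be cardinals with θ₁ regular. If ℱ ⊆ ^κOrd is (θ₂⁺,θ₁,J)-free, then ℱ is ⟨θ₂,θ₁,J⟩-free, i.e. every ℱ' ⊆ ℱ of cardinality θ₂ has a J-free subset of cardinality θ₁. -/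
noncomputable section

open Cardinal Set Order

/-! A subfamily of size `θ₂` is partitioned into pieces of size `< θ₁` that are pairwise
`J`-free of each other. As `θ₁` is regular, fewer than `θ₁` such pieces would cover fewer than
`θ₁ ≤ θ₂` functions, so there are at least `θ₁` nonempty pieces; choosing one function from each
of `θ₁` of them gives a `J`-free family, since any two chosen functions lie in different pieces. -/

theorem Cardinal.le_mk_diff_singleton_empty_of_le_mk_sUnion {α : Type*} {c : Cardinal}
    (hc : c.IsRegular) {P : Set (Set α)} (hP : ∀ p ∈ P, #p < c) (hU : c ≤ #(⋃₀ P)) :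
    c ≤ #↥(P \ {∅}) := by
  by_contra! hlt
  refine hU.not_gt ?_
  rw [← sUnion_sdiff_singleton_empty, sUnion_eq_iUnion,
    card_iUnion_lt_iff_forall_of_isRegular hc hlt]
  exact fun p => hP p p.2.1

theorem Set.PairwiseDisjoint.exists_transversal {α : Type*} {P : Set (Set α)}
    (hP : P.PairwiseDisjoint id) :
    ∃ T ⊆ ⋃₀ P, #T = #↥(P \ {∅}) ∧ ∀ p ∈ P, (T ∩ p).Subsingleton := by
  let pick : ↥(P \ {∅}) → α := fun p => (nonempty_iff_ne_empty.2 p.2.2).some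
  have pick_mem : ∀ p : ↥(P \ {∅}), pick p ∈ (p : Set α) := fun p => Nonempty.some_mem _
  have pick_eq : ∀ (p : ↥(P \ {∅})) {q}, q ∈ P → pick p ∈ q → (p : Set α) = q :=
    fun p _ hq hpq => hP.elim_set p.2.1 hq _ (pick_mem p) hpq
  have pick_injective : Function.Injective pick := fun p q hpq =>
    Subtype.ext (pick_eq p q.2.1 (hpq ▸ pick_mem q))
  refine ⟨Set.range pick, ?_, mk_range_eq _ pick_injective, ?_⟩
  · rintro _ ⟨p, rfl⟩
    exact ⟨p, p.2.1, pick_mem p⟩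
  · rintro p hp _ ⟨⟨q, rfl⟩, hq⟩ _ ⟨⟨r, rfl⟩, hr⟩
    congr 1
    exact Subtype.ext ((pick_eq q hp hq).trans (pick_eq r hp hr).symm)

namespace PaperDefs

theorem freeFam_of_transversal {ι : Type 1} {J : Set ι → Prop}
    {P : Set (Set (ι → Ordinal.{0}))} {s : (ι → Ordinal.{0}) → Set ι}
    (hcross : ∀ p₁ ∈ P, ∀ p₂ ∈ P, p₁ ≠ p₂ → ∀ f₁ ∈ p₁, ∀ f₂ ∈ p₂,
      ∀ i, i ∉ s f₁ → i ∉ s f₂ → f₁ i ≠ f₂ i)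
    {T : Set (ι → Ordinal.{0})} (hTU : T ⊆ ⋃₀ P) (hs : ∀ f ∈ T, J (s f))
    (hsep : ∀ p ∈ P, (T ∩ p).Subsingleton) : FreeFam J T := by
  refine ⟨s, hs, fun f₁ hf₁ f₂ hf₂ hne => ?_⟩
  obtain ⟨p₁, hp₁, hf₁p⟩ := hTU hf₁
  obtain ⟨p₂, hp₂, hf₂p⟩ := hTU hf₂
  refine hcross p₁ hp₁ p₂ hp₂ ?_ f₁ hf₁p f₂ hf₂p
  rintro rfl
  exact hne (hsep p₁ hp₁ ⟨hf₁, hf₁p⟩ ⟨hf₂, hf₂p⟩)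

theorem statement15_general (κ θ₁ θ₂ : Cardinal.{0}) (hθ₁ : θ₁.IsRegular) (h12 : θ₁ ≤ θ₂)
    (J : Set (KIdx κ) → Prop)
    (F : Set (KIdx κ → Ordinal))
    (hfree : FreeFamTwo J (Order.succ θ₂) θ₁ F) :
    ∀ F' ⊆ F, #F' = Cardinal.lift.{1} θ₂ →
      ∃ F'' ⊆ F', #F'' = Cardinal.lift.{1} θ₁ ∧ FreeFam J F'' := by
  intro F' hF'F hcard
  obtain ⟨P, s, hPU, hPdisj, hPsmall, hs, hcross⟩ :=
    hfree F' hF'F (by rw [hcard]; exact lift_lt.2 (lt_succ θ₂))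
  have many_pieces : Cardinal.lift.{1} θ₁ ≤ #↥(P \ {∅}) :=
    le_mk_diff_singleton_empty_of_le_mk_sUnion hθ₁.lift hPsmall
      (by rw [hPU, hcard]; exact lift_le.2 h12)
  obtain ⟨T, hTU, hTcard, hTsep⟩ :=
    Set.PairwiseDisjoint.exists_transversal fun p hp q hq hpq => hPdisj p hp q hq hpq
  obtain ⟨F'', hF''T, hF''card⟩ := le_mk_iff_exists_subset.1 (hTcard ▸ many_pieces)
  have hTF' : T ⊆ F' := hPU ▸ hTU
  exact ⟨F'', hF''T.trans hTF', hF''card, freeFam_of_transversal hcross (hF''T.trans hTU)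
    (fun f hf => hs f (hTF' (hF''T hf)))
    fun p hp => (hTsep p hp).anti (inter_subset_inter_left _ hF''T)⟩

/-- a `(θ₂⁺,θ₁,J)`-free family is `⟨θ₂,θ₁,J⟩`-free: every subfamily of
cardinality `θ₂` has a `J`-free subfamily of cardinality `θ₁`. -/
theorem statement15 (κ θ₁ θ₂ : Cardinal.{0}) (hθ₁ : θ₁.IsRegular) (h12 : θ₁ ≤ θ₂)
    (J : Set (KIdx κ) → Prop) (hJ : IsIdealOn J)
    (F : Set (KIdx κ → Ordinal))
    (hfree : FreeFamTwo J (Order.succ θ₂) θ₁ F) :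
    ∀ F' ⊆ F, #F' = Cardinal.lift.{1} θ₂ →
      ∃ F'' ⊆ F', #F'' = Cardinal.lift.{1} θ₁ ∧ FreeFam J F'' :=
  statement15_general κ θ₁ θ₂ hθ₁ h12 J F hfree

end PaperDefs
end
end

section
/- Let J be an ideal on a cardinal κ and f̄ = ⟨f_α : α < λ⟩ a <_J-increasing sequence of functions κ → Ord. If δ ≤ λ is chaotic for f̄ (δ ∈ S_ch[f̄,J]), then there is a club e of δ such that every α ∈ e with cf(α) > κ is chaotic for f̄. -/
noncomputable section

open Cardinal Set Order

/-!
Fix sets `u i` witnessing that `δ` is chaotic. If `cf δ ≤ κ`, the successors of the points of a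
cofinal subset of `δ` of size `cf δ`, together with their limits, form a club of `δ` with no points
of cofinality `> κ`. Otherwise the ordinals `α < δ` such that every `γ < α` has a chaos witness
`β ∈ (γ, α)` form a club of `δ` (unbounded since `cf δ > ℵ₀` lets us close under taking witnesses
`ω` times), and the same `u` makes each of them chaotic. Witnesses pass down from `γ'` to any `γ < γ'` since `f γ <_J f γ'`
and `minAbove (u i)` is monotone.
-/

universe u

namespace PaperDefs

theorem IsIdealOn.infinite {ι : Type*} {J : Set ι → Prop} (hJ : IsIdealOn J) : Infinite ι := by
  by_contra hfin
  have : Finite ι := not_infinite_iff_finite.1 hfin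
  refine hJ.proper (Set.Finite.induction_on _ Set.finite_univ hJ.empty_mem ?_)
  intro i s _ _ hs
  exact Set.insert_eq i s ▸ hJ.union_mem (hJ.singleton_mem i) hs

theorem aleph0_le_of_isIdealOn {κ : Cardinal.{0}} {J : Set (KIdx κ) → Prop} (hJ : IsIdealOn J) :
    ℵ₀ ≤ κ := by
  have := hJ.infinite
  rw [← Cardinal.lift_le.{1}, lift_aleph0, ← card_ord κ, ← Cardinal.mk_Iio_ordinal]
  exact Cardinal.aleph0_le_mk _

theorem minAbove_mono (u : Set Ordinal.{0}) : Monotone (minAbove u) := by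
  intro a b hab
  unfold minAbove
  split_ifs with ha hb hb
  · exact WithTop.coe_le_coe.2 (csInf_le_csInf' hb fun β hβ => ⟨hβ.1, hab.trans hβ.2⟩)
  · exact le_top
  · exact absurd (hb.imp fun β hβ => ⟨hβ.1, hab.trans hβ.2⟩) ha
  · exact le_top

def ChWitness {ι : Type*} (J : Set ι → Prop) (u : ι → Set Ordinal) (f : Ordinal → ι → Ordinal)
    (γ β : Ordinal) : Prop :=
  ¬ J {i | minAbove (u i) (f γ i) < minAbove (u i) (f β i)}

theorem ChWitness.of_lt {ι : Type*} {J : Set ι → Prop} (hJ : IsIdealOn J) {u : ι → Set Ordinal}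
    {f : Ordinal → ι → Ordinal} {γ γ' β : Ordinal} (hlt : LtJ J (f γ) (f γ'))
    (h : ChWitness J u f γ' β) : ChWitness J u f γ β := by
  refine fun hγ => h (hJ.mono ?_ (hJ.union_mem hγ hlt))
  intro i hi
  by_cases hfi : f γ i < f γ' i
  · exact Or.inl ((minAbove_mono (u i) hfi.le).trans_lt hi)
  · exact Or.inr hfi

def witnessClosed (R : Ordinal → Ordinal → Prop) (δ : Ordinal) : Set Ordinal :=
  {α | α < δ ∧ ∀ γ < α, ∃ β < α, R γ β}

theorem isClubIn_witnessClosed {R : Ordinal → Ordinal → Prop} {δ : Ordinal}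
    (hunbdd : ∀ α < δ, ∃ β ∈ witnessClosed R δ, α < β) : IsClubIn (witnessClosed R δ) δ := by
  refine ⟨fun α hα => hα.1, hunbdd, fun α hαδ _ hlim => ⟨hαδ, fun γ hγ => ?_⟩⟩
  obtain ⟨α', hα', hγα', hα'α⟩ := hlim γ hγ
  obtain ⟨β, hβα', hR⟩ := hα'.2 γ hγα'
  exact ⟨β, hβα'.trans hα'α, hR⟩

theorem witnessClosed_unbounded_of_aleph0_lt_cof {R : Ordinal → Ordinal → Prop} {δ : Ordinal}
    (hδ : ℵ₀ < δ.cof) (hR : ∀ γ < δ, ∃ β < δ, γ < β ∧ R γ β)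
    (hdown : ∀ {γ γ' β}, γ < γ' → γ' < δ → R γ' β → R γ β) :
    ∀ α < δ, ∃ β ∈ witnessClosed R δ, α < β := by
  choose! B hBδ hB_gt hB using hR
  intro α₀ hα₀
  have hnfp : Ordinal.nfp B α₀ < δ := Ordinal.nfp_lt_ord hδ hBδ hα₀
  have hiter : ∀ n, B^[n] α₀ < δ := fun n => (Ordinal.iterate_le_nfp B α₀ n).trans_lt hnfp
  refine ⟨Ordinal.nfp B α₀, ⟨hnfp, fun γ hγ => ?_⟩,
    (hB_gt α₀ hα₀).trans_le (Ordinal.iterate_le_nfp B α₀ 1)⟩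
  obtain ⟨n, hn⟩ := Ordinal.lt_nfp_iff.1 hγ
  have hB_lt : B (B^[n] α₀) < Ordinal.nfp B α₀ := calc
    B (B^[n] α₀) = B^[n + 1] α₀ := (Function.iterate_succ_apply' B n α₀).symm
    _ < B (B^[n + 1] α₀) := hB_gt _ (hiter (n + 1))
    _ = B^[n + 2] α₀ := (Function.iterate_succ_apply' B (n + 1) α₀).symm
    _ ≤ Ordinal.nfp B α₀ := Ordinal.iterate_le_nfp B α₀ (n + 2)
  exact ⟨_, hB_lt, hdown hn (hiter n) (hB _ (hiter n))⟩

theorem lift_cof_le_of_mem_witnessClosed {S : Set Ordinal.{u}} {δ α : Ordinal.{u}}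
    (hα : α ∈ witnessClosed (fun γ s => γ ≤ s ∧ s ∈ S) δ) : Cardinal.lift.{u + 1} α.cof ≤ #S := by
  have hcofinal : IsCofinal {x : Iio α | x.1 ∈ S} := fun x => by
    obtain ⟨s, hsα, hxs, hsS⟩ := hα.2 x.1 x.2
    exact ⟨⟨s, hsα⟩, hsS, hxs⟩
  calc Cardinal.lift.{u + 1} α.cof = Order.cof (Iio α) := by rw [Ordinal.cof_Iio, Ordinal.lift_cof]
    _ ≤ #{x : Iio α | x.1 ∈ S} := Order.cof_le hcofinal
    _ ≤ #S := Cardinal.mk_le_of_injective (f := fun x => ⟨x.1.1, x.2⟩)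
        fun x y h => by
          simp only [Subtype.mk.injEq] at h
          exact Subtype.ext (Subtype.ext h)

theorem exists_isClubIn_forall_cof_le {δ : Ordinal.{0}} (hδ : ∀ γ < δ, succ γ < δ) :
    ∃ C, IsClubIn C δ ∧ ∀ α ∈ C, α.cof ≤ δ.cof := by
  obtain ⟨s, hs, hs_card⟩ := Order.exists_cof_eq (Iio δ)
  set S : Set Ordinal := Subtype.val '' s
  refine ⟨witnessClosed (fun γ s => γ ≤ s ∧ s ∈ S) δ, isClubIn_witnessClosed ?_, fun α hα => ?_⟩
  · intro γ hγ
    obtain ⟨x, hxs, hγx⟩ := hs ⟨γ, hγ⟩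
    refine ⟨succ x.1, ⟨hδ x.1 x.2, fun γ' hγ' => ⟨x.1, lt_succ x.1, ?_, x, hxs, rfl⟩⟩, ?_⟩
    · exact lt_succ_iff.1 hγ'
    · exact lt_succ_iff.2 hγx
  · have hS : #S = Cardinal.lift.{1} δ.cof := by
      rw [Cardinal.mk_image_eq Subtype.val_injective, hs_card, Ordinal.cof_Iio, Ordinal.lift_cof]
    exact Cardinal.lift_le.1 (hS ▸ lift_cof_le_of_mem_witnessClosed hα)

/-- chaotic points are club-often chaotic below. -/
theorem statement17 (κ : Cardinal.{0}) (J : Set (KIdx κ) → Prop) (hJ : IsIdealOn J)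
    (lam : Ordinal) (f : Ordinal → KIdx κ → Ordinal)
    (hinc : ∀ α β : Ordinal, α < β → β < lam → LtJ J (f α) (f β))
    (δ : Ordinal) (hδ : δ ≤ lam)
    (hch : ChPoint J κ f δ) :
    ∃ e : Set Ordinal, IsClubIn e δ ∧ ∀ α ∈ e, κ < α.cof → ChPoint J κ f α := by
  obtain ⟨u, hu_card, hu⟩ := hch
  rcases le_or_gt δ.cof κ with hcof | hcof
  · have hδ_succ : ∀ γ < δ, succ γ < δ := fun γ hγ => by
      obtain ⟨β, hγβ, hβδ, -⟩ := hu γ hγ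
      exact (succ_le_of_lt hγβ).trans_lt hβδ
    obtain ⟨C, hC, hC_cof⟩ := exists_isClubIn_forall_cof_le hδ_succ
    exact ⟨C, hC, fun α hα hκα => absurd ((hC_cof α hα).trans hcof) hκα.not_ge⟩
  · refine ⟨witnessClosed (fun γ β => γ < β ∧ ChWitness J u f γ β) δ,
      isClubIn_witnessClosed (witnessClosed_unbounded_of_aleph0_lt_cof ?_ ?_ ?_),
      fun α hα _ => ⟨u, hu_card, fun γ hγ => ?_⟩⟩
    · exact (aleph0_le_of_isIdealOn hJ).trans_lt hcof
    · intro γ hγ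
      obtain ⟨β, hγβ, hβδ, hβ⟩ := hu γ hγ
      exact ⟨β, hβδ, hγβ, hγβ, hβ⟩
    · intro γ γ' β hγγ' hγ'δ ⟨hγ'β, hβ⟩
      exact ⟨hγγ'.trans hγ'β, hβ.of_lt hJ (hinc γ γ' hγγ' (hγ'δ.trans_le hδ))⟩
    · obtain ⟨β, hβα, hγβ, hβ⟩ := hα.2 γ hγ
      exact ⟨β, hγβ, hβα, hβ⟩

end PaperDefs
end
end

section
/- Let J be an ideal on a cardinal κ and f̄ = ⟨f_α : α < λ⟩ a <_J-increasing sequence of functions κ → Ord. If δ ≤ λ is good (flat) for f̄ (δ ∈ S_gd[f̄,J]), then there is a club e of δ such that every α ∈ e with cf(α) > κ is good for f̄. -/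
noncomputable section

open Cardinal Set Order

/-!
Let `⟨A_ε : ε < cf δ⟩` witness that `δ` is good. Interleaving `f̄` with `A` produces a normal
sequence `⟨α_ζ : ζ < cf δ⟩` cofinal in `δ` and indices `ε_ζ < cf δ` with
`f_{α_ζ} <_J A_{ε_ζ} <_J f_{α_{ζ+1}}`; its range is a club of `δ`. At a limit `ζ`, `f̄ ↾ α_ζ` and
`⟨A_ε : ε < sup_{ξ<ζ} (ε_ξ + 1)⟩` are mutually `<_J`-cofinal, which forces equal cofinalities, so
`α_ζ` is good. The other points of the club are `0` and successors, of cofinality at most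
`1 ≤ κ`.
-/

universe u

namespace Ordinal

theorem cof_le_of_eventually_lt {a b : Ordinal.{u}} (F : Ordinal.{u} → Ordinal.{u})
    (hF : ∀ x < a, F x < b) (h : ∀ y < b, ∃ x < a, ∀ x' < a, x ≤ x' → y < F x') :
    b.cof ≤ a.cof := by
  have : Order.cof (Iio b) ≤ Order.cof (Iio a) := by
    rw [le_cof_iff]
    intro s hs
    let G : Iio a → Iio b := fun x => ⟨F x, hF x x.2⟩
    refine (cof_le (s := G '' s) fun y => ?_).trans mk_image_le
    obtain ⟨x, hx, hxF⟩ := h y y.2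
    obtain ⟨x', hx's, hxx'⟩ := hs ⟨x, hx⟩
    exact ⟨G x', mem_image_of_mem G hx's, (hxF x' x'.2 hxx').le⟩
  simpa [cof_Iio, ← lift_cof] using this

theorem exists_strictMonoOn_cofinal (γ : Ordinal.{u}) :
    ∃ t : Ordinal.{u} → Ordinal.{u}, StrictMonoOn t (Iio γ.cof.ord) ∧
      (∀ η < γ.cof.ord, t η < γ) ∧ ∀ ε < γ, ∃ η < γ.cof.ord, ε ≤ t η := by
  classical
  obtain ⟨t, ht⟩ := exists_isFundamentalSeq (o := γ) rfl
  refine ⟨fun η => if h : η ∈ Iio γ.cof.ord then t ⟨η, h⟩ else 0, fun η hη η' hη' hlt => ?_,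
    fun η hη => ?_, fun ε hε => ?_⟩
  · dsimp only
    rw [dif_pos hη, dif_pos hη']
    exact ht.strictMono (Subtype.mk_lt_mk.2 hlt)
  · dsimp only
    rw [dif_pos (mem_Iio.2 hη)]
    exact (t ⟨η, hη⟩).2
  · obtain ⟨_, ⟨⟨η, hη⟩, rfl⟩, hle⟩ := ht.isCofinal_range ⟨ε, hε⟩
    refine ⟨η, hη, ?_⟩
    dsimp only
    rw [dif_pos hη]
    exact hle

/-- Taking `max x (step ξ x) + 1` at successors makes the iteration normal whatever `step` is. -/
def normalIter (step : Ordinal.{u} → Ordinal.{u} → Ordinal.{u}) (ζ : Ordinal.{u}) :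
    Ordinal.{u} :=
  limitRecOn ζ 0 (fun ξ x => max x (step ξ x) + 1) fun μ _ ih => ⨆ ξ : Iio μ, ih ξ ξ.2

section normalIter

variable (step : Ordinal.{u} → Ordinal.{u} → Ordinal.{u})

@[simp]
theorem normalIter_zero : normalIter step 0 = 0 :=
  limitRecOn_zero ..

@[simp]
theorem normalIter_add_one (ξ : Ordinal.{u}) :
    normalIter step (ξ + 1) = max (normalIter step ξ) (step ξ (normalIter step ξ)) + 1 :=
  limitRecOn_add_one ..

theorem normalIter_limit {μ : Ordinal.{u}} (hμ : IsSuccLimit μ) :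
    normalIter step μ = ⨆ ξ : Iio μ, normalIter step ξ :=
  limitRecOn_limit _ _ _ _ hμ

theorem isNormal_normalIter : IsNormal (normalIter step) := by
  refine IsNormal.of_succ_lt (fun ξ => ?_) fun {μ} hμ => ?_
  · rw [succ_eq_add_one, normalIter_add_one, lt_add_one_iff]
    exact le_max_left _ _
  · rw [normalIter_limit step hμ, Set.image_eq_range]
    have := hμ.nonempty_Iio.to_subtype
    exact isLUB_ciSup bddAbove_of_small

theorem isSuccLimit_normalIter_iff {ζ : Ordinal.{u}} :
    IsSuccLimit (normalIter step ζ) ↔ IsSuccLimit ζ := by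
  refine ⟨fun h => ?_, (isNormal_normalIter step).map_isSuccLimit⟩
  rcases zero_or_succ_or_isSuccLimit ζ with rfl | ⟨ξ, rfl⟩ | hζ
  · exact absurd (normalIter_zero step) h.ne_bot
  · rw [succ_eq_add_one, normalIter_add_one] at h
    exact absurd h (not_isSuccLimit_add_one _)
  · exact hζ

theorem normalIter_lt {θ δ : Ordinal.{u}} (hδ : IsSuccPrelimit δ) (hθ : θ ≤ δ.cof.ord)
    (hstep : ∀ ξ < θ, ∀ x < δ, step ξ x < δ) {ζ : Ordinal.{u}} (hζ : ζ < θ) :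
    normalIter step ζ < δ := by
  induction ζ using limitRecOn with
  | zero => exact (normalIter_zero step).symm ▸ cof_pos.1 (ord_pos.1 (hζ.trans_le hθ))
  | add_one ξ ih =>
    have hξ := (lt_add_one ξ).trans hζ
    rw [normalIter_add_one]
    exact hδ.add_one_lt (max_lt (ih hξ) (hstep ξ hξ _ (ih hξ)))
  | limit μ hμ ih =>
    rw [normalIter_limit step hμ]
    refine lift_iSup_lt_of_lt_cof ?_ fun ξ => ih ξ ξ.2 (ξ.2.trans hζ)
    rw [← lift_cof, Cardinal.mk_Iio_ordinal, Cardinal.lift_lift, Cardinal.lift_lt, ← lt_ord]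
    exact hζ.trans_le hθ

end normalIter

theorem isSuccPrelimit_ord_cof {o : Ordinal.{u}} (ho : IsSuccPrelimit o) :
    IsSuccPrelimit o.cof.ord := by
  rcases eq_or_ne o 0 with rfl | ho0
  · simp
  · exact (isSuccLimit_ord (aleph0_le_cof_iff.2 (one_lt_cof_iff.2
      (isSuccLimit_iff.2 ⟨ho0, ho⟩)))).isSuccPrelimit

end Ordinal

namespace PaperDefs

theorem isClubIn_image_Iio {s : Ordinal.{0} → Ordinal.{0}} (hs : IsNormal s) {θ δ : Ordinal}
    (hsδ : ∀ ζ < θ, s ζ < δ) (hcof : ∀ β < δ, ∃ ζ < θ, β < s ζ) :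
    IsClubIn (s '' Iio θ) δ := by
  refine ⟨?_, fun β hβ => ?_, fun α hα hα0 hcl => ?_⟩
  · rintro _ ⟨ζ, hζ, rfl⟩
    exact hsδ ζ hζ
  · obtain ⟨ζ, hζ, hlt⟩ := hcof β hβ
    exact ⟨s ζ, mem_image_of_mem s hζ, hlt⟩
  obtain ⟨ζ, hζ, hαζ⟩ := hcof α hα
  rcases lt_or_ge α (s 0) with h0 | h0
  · obtain ⟨_, ⟨ζ', -, rfl⟩, -, hlt⟩ := hcl 0 hα0
    exact absurd (hlt.trans h0) (hs.monotone (zero_le : 0 ≤ ζ')).not_gt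
  obtain ⟨μ, hμα, hαμ⟩ := hs.exists_map_le_lt_map_succ h0
  rcases hμα.eq_or_lt with heq | hlt
  · exact ⟨μ, (hs.strictMono.lt_iff_lt.1 (hμα.trans_lt hαζ)).trans hζ, heq⟩
  · obtain ⟨_, ⟨ζ', -, rfl⟩, h1, h2⟩ := hcl (s μ) hlt
    have hμζ' : μ < ζ' := hs.strictMono.lt_iff_lt.1 h1
    have hζ'μ : ζ' < succ μ := hs.strictMono.lt_iff_lt.1 (h2.trans hαμ)
    exact absurd (lt_succ_iff.1 hζ'μ) hμζ'.not_ge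

section Ideal

variable {ι : Type*} {J : Set ι → Prop} {a b c : ι → Ordinal}

theorem IsIdealOn.nonempty (hJ : IsIdealOn J) : Nonempty ι := by
  by_contra h
  rw [not_nonempty_iff, ← Set.univ_eq_empty_iff] at h
  exact hJ.proper (h ▸ hJ.empty_mem)

theorem IsIdealOn.ltJ_trans_s18 (hJ : IsIdealOn J) (hab : LtJ J a b) (hbc : LtJ J b c) :
    LtJ J a c :=
  hJ.mono (fun i (hi : ¬ a i < c i) => not_and_or.1 fun h => hi (h.1.trans h.2))
    (hJ.union_mem hab hbc)

theorem IsIdealOn.ltJ_irrefl (hJ : IsIdealOn J) (a : ι → Ordinal) : ¬ LtJ J a a := by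
  simpa [LtJ] using hJ.proper

theorem IsIdealOn.ltJ_of_ltJ_of_le (hJ : IsIdealOn J) (hab : LtJ J a b) (hbc : b ≤ c) :
    LtJ J a c :=
  hJ.mono (fun i (hi : ¬ a i < c i) (h : a i < b i) => hi (h.trans_le (hbc i))) hab

theorem IsIdealOn.ltJ_of_le_of_ltJ (hJ : IsIdealOn J) (hab : a ≤ b) (hbc : LtJ J b c) :
    LtJ J a c :=
  hJ.mono (fun i (hi : ¬ a i < c i) (h : b i < c i) => hi ((hab i).trans_lt h)) hbc

theorem IsIdealOn.lt_of_ltJ_of_monotoneOn (hJ : IsIdealOn J) {B : ι → Ordinal → Ordinal}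
    {γ ε ε' : Ordinal} (hB : ∀ i, MonotoneOn (B i) (Iio γ)) (hε : ε < γ) (hε' : ε' < γ)
    (h : LtJ J (fun i => B i ε) (fun i => B i ε')) : ε < ε' :=
  lt_of_not_ge fun hle => hJ.ltJ_irrefl _ (hJ.ltJ_of_ltJ_of_le h fun i => hB i hε' hε hle)

end Ideal

def IsLtJIncreasing {ι : Type*} (J : Set ι → Prop) (f : Ordinal.{0} → ι → Ordinal.{0})
    (lam : Ordinal.{0}) : Prop :=
  ∀ α β : Ordinal, α < β → β < lam → LtJ J (f α) (f β)

theorem IsLtJIncreasing.lt_of_ltJ {ι : Type*} {J : Set ι → Prop}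
    {f : Ordinal.{0} → ι → Ordinal.{0}} {lam β γ : Ordinal.{0}} (hinc : IsLtJIncreasing J f lam)
    (hJ : IsIdealOn J) (hβ : β < lam) (h : LtJ J (f β) (f γ)) : β < γ :=
  lt_of_not_ge fun hle => hle.eq_or_lt.elim (fun heq => hJ.ltJ_irrefl _ (heq ▸ h))
    fun hlt => hJ.ltJ_irrefl _ (hJ.ltJ_trans_s18 h (hinc γ β hlt hβ))

section Interleaves

variable {ι : Type 1} {J : Set ι → Prop} {f : Ordinal.{0} → ι → Ordinal.{0}}
  {lam α γ : Ordinal.{0}} {A B : ι → Ordinal.{0} → Ordinal.{0}}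

/-- `GoodPoint J f α` unfolds to `∃ B, Interleaves J f α B α.cof.ord`. -/
def Interleaves (J : Set ι → Prop) (f : Ordinal.{0} → ι → Ordinal.{0}) (α : Ordinal.{0})
    (B : ι → Ordinal.{0} → Ordinal.{0}) (γ : Ordinal.{0}) : Prop :=
  (∀ i, StrictMonoOn (B i) (Iio γ)) ∧
  (∀ β < α, ∃ ε < γ, LtJ J (f β) (fun i => B i ε)) ∧
  ∀ ε < γ, ∃ β < α, LtJ J (fun i => B i ε) (f β)

theorem Interleaves.isSuccPrelimit (h : Interleaves J f α B γ) (hJ : IsIdealOn J)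
    (hinc : IsLtJIncreasing J f lam) (hα : α ≤ lam) : IsSuccPrelimit α := by
  intro σ hσ
  obtain ⟨ε, hε, hσB⟩ := h.2.1 σ hσ.lt
  obtain ⟨β, hβ, hBβ⟩ := h.2.2 ε hε
  exact (hσ.le_of_lt hβ).not_gt (hinc.lt_of_ltJ hJ (hσ.lt.trans_le hα) (hJ.ltJ_trans_s18 hσB hBβ))

theorem Interleaves.cof_eq (h : Interleaves J f α B γ) (hJ : IsIdealOn J)
    (hinc : IsLtJIncreasing J f lam) (hα : α ≤ lam) : γ.cof = α.cof := by
  obtain ⟨hB, hfB, hBf⟩ := h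
  have hBmono : ∀ i, MonotoneOn (B i) (Iio γ) := fun i => (hB i).monotoneOn
  choose! c hcγ hc using hfB
  choose! b hbα hb using hBf
  apply le_antisymm
  · refine Ordinal.cof_le_of_eventually_lt c hcγ fun ε hε => ⟨b ε, hbα ε hε, fun β hβ hle => ?_⟩
    refine hJ.lt_of_ltJ_of_monotoneOn hBmono hε (hcγ β hβ) (hJ.ltJ_trans_s18 (hb ε hε) ?_)
    rcases hle.eq_or_lt with rfl | hlt
    · exact hc _ hβ
    · exact hJ.ltJ_trans_s18 (hinc _ _ hlt (hβ.trans_le hα)) (hc β hβ)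
  · refine Ordinal.cof_le_of_eventually_lt b hbα fun β hβ => ⟨c β, hcγ β hβ, fun ε hε hle => ?_⟩
    refine hinc.lt_of_ltJ hJ (hβ.trans_le hα) (hJ.ltJ_trans_s18 ?_ (hb ε hε))
    exact hJ.ltJ_of_ltJ_of_le (hc β hβ) fun i => hBmono i (hcγ β hβ) hε hle

theorem Interleaves.comp (h : Interleaves J f α B γ) (hJ : IsIdealOn J)
    {t : Ordinal.{0} → Ordinal.{0}} {γ' : Ordinal.{0}} (ht : StrictMonoOn t (Iio γ'))
    (htγ : ∀ η < γ', t η < γ) (htcof : ∀ ε < γ, ∃ η < γ', ε ≤ t η) :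
    Interleaves J f α (fun i η => B i (t η)) γ' := by
  obtain ⟨hB, hfB, hBf⟩ := h
  refine ⟨fun i => (hB i).comp ht htγ, fun β hβ => ?_, fun η hη => hBf (t η) (htγ η hη)⟩
  obtain ⟨ε, hε, hlt⟩ := hfB β hβ
  obtain ⟨η, hη, hle⟩ := htcof ε hε
  exact ⟨η, hη, hJ.ltJ_of_ltJ_of_le hlt fun i => (hB i).monotoneOn hε (htγ η hη) hle⟩

theorem Interleaves.goodPoint (h : Interleaves J f α B γ) (hJ : IsIdealOn J)
    (hinc : IsLtJIncreasing J f lam) (hα : α ≤ lam) : GoodPoint J f α := by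
  obtain ⟨t, ht, htγ, htcof⟩ := Ordinal.exists_strictMonoOn_cofinal γ
  have h' := h.comp hJ ht htγ htcof
  rw [h.cof_eq hJ hinc hα] at h'
  exact ⟨_, h'⟩

theorem goodPoint_of_ltJ_zigzag (hJ : IsIdealOn J) (hinc : IsLtJIncreasing J f lam)
    {s d : Ordinal.{0} → Ordinal.{0}} (hs : IsNormal s) {ζ θ : Ordinal.{0}} (hζ : IsSuccLimit ζ)
    (hsζ : s ζ ≤ lam) (hA : ∀ i, StrictMonoOn (A i) (Iio θ)) (hdθ : ∀ ξ < ζ, d ξ < θ)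
    (hfA : ∀ ξ < ζ, LtJ J (f (s ξ)) (fun i => A i (d ξ)))
    (hAf : ∀ ξ < ζ, LtJ J (fun i => A i (d ξ)) (f (s (ξ + 1)))) :
    GoodPoint J f (s ζ) := by
  refine Interleaves.goodPoint (B := A) (γ := ⨆ ξ : Iio ζ, d ξ + 1)
    ⟨fun i => (hA i).mono (Iio_subset_Iio (Ordinal.iSup_add_one_le fun ξ => hdθ ξ ξ.2)),
      fun β hβ => ?_, fun ε hε => ?_⟩ hJ hinc hsζ
  · obtain ⟨ξ, hξ, hβξ⟩ := (hs.lt_iff_exists_lt hζ).1 hβ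
    exact ⟨d ξ, Ordinal.lt_iSup_add_one (fun ξ : Iio ζ => d ξ) ⟨ξ, hξ⟩,
      hJ.ltJ_trans_s18 (hinc _ _ hβξ ((hs.strictMono hξ).trans_le hsζ)) (hfA ξ hξ)⟩
  · obtain ⟨⟨ξ, hξ⟩, hεξ⟩ := Ordinal.lt_iSup_add_one_iff.1 hε
    exact ⟨s (ξ + 1), hs.strictMono (hζ.add_one_lt hξ), hJ.ltJ_of_le_of_ltJ
      (fun i => (hA i).monotoneOn (hεξ.trans_lt (hdθ ξ hξ)) (hdθ ξ hξ) hεξ) (hAf ξ hξ)⟩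

theorem GoodPoint.exists_isClubIn_goodPoint {δ : Ordinal.{0}} (hgd : GoodPoint J f δ)
    (hJ : IsIdealOn J) (hinc : IsLtJIncreasing J f lam) (hδ : δ ≤ lam) :
    ∃ e, IsClubIn e δ ∧ ∀ α ∈ e, IsSuccLimit α → GoodPoint J f α := by
  obtain ⟨A, hA⟩ := hgd
  have hδlim : IsSuccPrelimit δ := Interleaves.isSuccPrelimit hA hJ hinc hδ
  obtain ⟨hAmono, hfA, hAf⟩ := hA
  set θ := δ.cof.ord
  have hθ : IsSuccPrelimit θ := Ordinal.isSuccPrelimit_ord_cof hδlim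
  choose! c hcθ hc using hfA
  choose! b hbδ hb using hAf
  -- `max _ ξ` makes the `A`-indices, hence the sequence, cofinal
  set step : Ordinal → Ordinal → Ordinal := fun ξ x => b (max (c x) ξ)
  set s := Ordinal.normalIter step
  have hs : IsNormal s := Ordinal.isNormal_normalIter step
  have hsδ : ∀ ζ < θ, s ζ < δ := fun ζ => Ordinal.normalIter_lt step hδlim le_rfl
    fun ξ hξ x hx => hbδ _ (max_lt (hcθ x hx) hξ)
  set d : Ordinal → Ordinal := fun ζ => max (c (s ζ)) ζ
  have hdθ : ∀ ζ < θ, d ζ < θ := fun ζ hζ => max_lt (hcθ _ (hsδ ζ hζ)) hζ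
  have hsd : ∀ ζ < θ, LtJ J (f (s ζ)) (fun i => A i (d ζ)) := fun ζ hζ =>
    hJ.ltJ_of_ltJ_of_le (hc _ (hsδ ζ hζ)) fun i =>
      (hAmono i).monotoneOn (hcθ _ (hsδ ζ hζ)) (hdθ ζ hζ) (le_max_left _ _)
  have hds : ∀ ζ < θ, LtJ J (fun i => A i (d ζ)) (f (s (ζ + 1))) := fun ζ hζ => by
    refine hJ.ltJ_trans_s18 (hb _ (hdθ ζ hζ)) (hinc _ _ ?_ ((hsδ _ (hθ.add_one_lt hζ)).trans_le hδ))
    show b (d ζ) < Ordinal.normalIter step (ζ + 1)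
    rw [Ordinal.normalIter_add_one]
    exact (le_max_right _ _).trans_lt (lt_add_one _)
  refine ⟨s '' Iio θ, isClubIn_image_Iio hs hsδ fun β hβ =>
    ⟨c β + 1, hθ.add_one_lt (hcθ β hβ), ?_⟩, ?_⟩
  · refine hinc.lt_of_ltJ hJ (hβ.trans_le hδ) (hJ.ltJ_trans_s18 ?_ (hds (c β) (hcθ β hβ)))
    exact hJ.ltJ_of_ltJ_of_le (hc β hβ) fun i =>
      (hAmono i).monotoneOn (hcθ β hβ) (hdθ _ (hcθ β hβ)) (le_max_right _ _)
  rintro _ ⟨ζ, hζ : ζ < θ, rfl⟩ hlim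
  have hζθ : ∀ ξ < ζ, ξ < θ := fun ξ hξ => hξ.trans hζ
  exact goodPoint_of_ltJ_zigzag hJ hinc hs ((Ordinal.isSuccLimit_normalIter_iff step).1 hlim)
    ((hsδ ζ hζ).le.trans hδ) hAmono (fun ξ hξ => hdθ ξ (hζθ ξ hξ))
    (fun ξ hξ => hsd ξ (hζθ ξ hξ)) fun ξ hξ => hds ξ (hζθ ξ hξ)

end Interleaves

/-- good points are club-often good below. -/
theorem statement18 (κ : Cardinal.{0}) (J : Set (KIdx κ) → Prop) (hJ : IsIdealOn J)
    (lam : Ordinal) (f : Ordinal → KIdx κ → Ordinal)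
    (hinc : ∀ α β : Ordinal, α < β → β < lam → LtJ J (f α) (f β))
    (δ : Ordinal) (hδ : δ ≤ lam)
    (hgd : GoodPoint J f δ) :
    ∃ e : Set Ordinal, IsClubIn e δ ∧ ∀ α ∈ e, κ < α.cof → GoodPoint J f α := by
  obtain ⟨e, he, hgood⟩ := hgd.exists_isClubIn_goodPoint hJ hinc hδ
  have hκ : κ ≠ 0 := by
    obtain ⟨i, hi⟩ := hJ.nonempty
    rintro rfl
    simp at hi
  refine ⟨e, he, fun α hα hκα => hgood α hα ?_⟩
  rw [← Ordinal.one_lt_cof_iff]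
  exact (Cardinal.one_le_iff_ne_zero.2 hκ).trans_lt hκα

end PaperDefs
end
end

section
/- Assume (λ,λ̄,J,κ) is a pcf-case with witness f̄ = ⟨f_α : α < λ⟩, σ is a regular cardinal with κ < σ < lim inf_J(λ̄), and S ∈ Ǐ_σ[λ]. Then there is a club E of λ such that E ∩ S ⊆ S_gd[f̄,J], i.e. every δ ∈ E ∩ S is good (flat) for f̄. -/
noncomputable section

open Cardinal Set Order

/-!
Fix the system `a` and the club `E₁` witnessing `S ∈ Ǐ_σ[λ]`, and let `rk` be the rank of
the well-founded relation `β ∈ a b`. By recursion on `b < λ` choose `γ b < λ`, increasing in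
`b`, with `g_b <_J f_{γ b}`, where `g_b(i) = sup {f_{γ β}(i) + 1 : β ∈ a b} + rk b`
(replaced by `0` where it leaves `∏ λ_i`). Let `E` be `E₁` intersected with the closure
points of `γ`. For `δ ∈ E ∩ S` with branch `e` (so `a (e ε) = e[ε]`) we get `rk (e ε) = ε`,
hence `ε ↦ g_{e ε}` is strictly increasing and pointwise above `f_{γ (e ξ)}` for `ξ < ε`, so
it bounds every `f_α` with `α < δ`. Since `λ_i ≥ σ` for `J`-almost all `i`, no cut-off
happens there, so `g_{e ε} <_J f_{γ (e ε)}` with `γ (e ε) < δ`: the branch witnesses that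
`δ` is good.
-/

namespace Ordinal

theorem sSup_image_Iio_lt_ord {c : Cardinal.{u}} (hc : c.IsRegular) {ε : Ordinal.{u}}
    (hε : ε.card < c) {g : Ordinal.{u} → Ordinal.{u}} (hg : ∀ ξ < ε, g ξ < c.ord) :
    sSup (g '' Iio ε) < c.ord := by
  refine sSup_lt_of_lt_cof ?_ (by rintro _ ⟨ξ, hξ, rfl⟩; exact hg ξ hξ)
  rw [← lift_cof, hc.cof_ord]
  calc #(g '' Iio ε) ≤ #(Iio ε) := mk_image_le
    _ = Cardinal.lift ε.card := Cardinal.mk_Iio_ordinal ε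
    _ < Cardinal.lift c := Cardinal.lift_lt.2 hε

theorem sSup_image_Iio_add_one (ε : Ordinal.{u}) : sSup ((· + 1) '' Iio ε) = ε := by
  refine le_antisymm (csSup_le' ?_) (le_of_forall_lt fun ξ hξ => ?_)
  · rintro _ ⟨ξ, hξ, rfl⟩
    exact Order.add_one_le_of_lt hξ
  · exact (lt_add_one ξ).trans_le (le_csSup bddAbove_of_small ⟨ξ, hξ, rfl⟩)

theorem strictMono_sSup_image_Iio_add (g : Ordinal.{u} → Ordinal.{u}) :
    StrictMono fun ε => sSup (g '' Iio ε) + ε := fun ε ε' h =>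
  calc sSup (g '' Iio ε) + ε ≤ sSup (g '' Iio ε') + ε :=
        add_le_add_left (csSup_le_csSup' bddAbove_of_small
          (image_mono (Iio_subset_Iio h.le))) ε
    _ < sSup (g '' Iio ε') + ε' := (add_lt_add_iff_left _).2 h

end Ordinal

theorem StrictMonoOn.le_apply_of_lt {o : Ordinal.{u}} {γ : Ordinal.{u} → Ordinal.{u}}
    (hγ : StrictMonoOn γ (Iio o)) {b : Ordinal.{u}} (hb : b < o) : b ≤ γ b := by
  induction b using WellFoundedLT.induction with
  | _ b IH =>
    by_contra! h
    exact (IH _ h (h.trans hb)).not_gt (hγ (h.trans hb) hb h)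

namespace PaperDefs

section Clubs

variable {c : Cardinal.{0}}

theorem exists_closurePoint (hc : c.IsRegular) (hc₀ : ℵ₀ < c) {g : Ordinal → Ordinal}
    (hg : ∀ x < c.ord, g x < c.ord) {α : Ordinal} (hα : α < c.ord) :
    ∃ β < c.ord, α < β ∧ ∀ x < β, g x < β := by
  have hlim := Cardinal.isSuccLimit_ord hc.aleph0_le
  let F : Ordinal → Ordinal := fun x => sSup ((fun y => g y + 1) '' Iio x)
  have hgF : ∀ x, ∀ y < x, g y < F x := fun x y hy =>
    (lt_add_one _).trans_le (le_csSup Ordinal.bddAbove_of_small ⟨y, hy, rfl⟩)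
  have hF : ∀ x < c.ord, F x < c.ord := fun x hx =>
    Ordinal.sSup_image_Iio_lt_ord hc (Cardinal.lt_ord.1 hx) fun y hy =>
      hlim.add_one_lt (hg y (hy.trans hx))
  refine ⟨Ordinal.nfp F (α + 1),
    Ordinal.nfp_lt_ord (by rwa [hc.cof_ord]) hF (hlim.add_one_lt hα),
    (lt_add_one α).trans_le (Ordinal.le_nfp F _), fun x hx => ?_⟩
  obtain ⟨n, hn⟩ := Ordinal.lt_nfp_iff.1 hx
  calc g x < F (F^[n] (α + 1)) := hgF _ x hn
    _ = F^[n + 1] (α + 1) := (Function.iterate_succ_apply' F n _).symm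
    _ ≤ Ordinal.nfp F (α + 1) := Ordinal.iterate_le_nfp F _ _

theorem isClubIn_closurePoints (hc : c.IsRegular) (hc₀ : ℵ₀ < c) {g : Ordinal → Ordinal}
    (hg : ∀ x < c.ord, g x < c.ord) :
    IsClubIn {δ | δ < c.ord ∧ ∀ x < δ, g x < δ} c.ord := by
  refine ⟨fun δ hδ => hδ.1, fun α hα => ?_, fun δ hδ _ hcl => ⟨hδ, fun x hx => ?_⟩⟩
  · obtain ⟨β, hβ, hαβ, hβg⟩ := exists_closurePoint hc hc₀ hg hα
    exact ⟨β, ⟨hβ, hβg⟩, hαβ⟩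
  · obtain ⟨η, hη, hxη, hηδ⟩ := hcl x hx
    exact (hη.2 x hxη).trans hηδ

theorem IsClubIn.mem_of_forall_lt {C : Set Ordinal} {o : Ordinal} (hC : IsClubIn C o)
    {next : Ordinal → Ordinal} (hnext : ∀ x < o, next x ∈ C ∧ x < next x) {β : Ordinal}
    (hβ : β < o) (h0 : 0 < β) (hβnext : ∀ x < β, next x < β) : β ∈ C :=
  hC.2.2 β hβ h0 fun x hx =>
    ⟨next x, (hnext x (hx.trans hβ)).1, (hnext x (hx.trans hβ)).2, hβnext x hx⟩

theorem IsClubIn.inter (hc : c.IsRegular) (hc₀ : ℵ₀ < c) {C₁ C₂ : Set Ordinal}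
    (h₁ : IsClubIn C₁ c.ord) (h₂ : IsClubIn C₂ c.ord) : IsClubIn (C₁ ∩ C₂) c.ord := by
  choose! next₁ hnext₁ using h₁.2.1
  choose! next₂ hnext₂ using h₂.2.1
  refine ⟨fun x hx => h₁.1 hx.1, fun α hα => ?_,
    fun δ hδ h0 hcl => ⟨h₁.2.2 δ hδ h0 fun x hx => ?_, h₂.2.2 δ hδ h0 fun x hx => ?_⟩⟩
  · obtain ⟨β, hβ, hαβ, hβnext⟩ := exists_closurePoint hc hc₀
      (g := fun x => max (next₁ x) (next₂ x))
      (fun x hx => max_lt (h₁.1 (hnext₁ x hx).1) (h₂.1 (hnext₂ x hx).1)) hα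
    have h0 : 0 < β := zero_le.trans_lt hαβ
    refine ⟨β, ⟨h₁.mem_of_forall_lt hnext₁ hβ h0 fun x hx => ?_,
      h₂.mem_of_forall_lt hnext₂ hβ h0 fun x hx => ?_⟩, hαβ⟩
    · exact (le_max_left _ _).trans_lt (hβnext x hx)
    · exact (le_max_right _ _).trans_lt (hβnext x hx)
  · obtain ⟨η, hη, hxη, hηδ⟩ := hcl x hx
    exact ⟨η, hη.1, hxη, hηδ⟩
  · obtain ⟨η, hη, hxη, hηδ⟩ := hcl x hx
    exact ⟨η, hη.2, hxη, hηδ⟩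

theorem aleph0_lt_of_mem_Scof {lam θ : Cardinal.{0}} (hθ : ℵ₀ ≤ θ) {δ : Ordinal}
    (hδ : δ ∈ Scof lam θ) : ℵ₀ < lam :=
  calc ℵ₀ ≤ δ.cof := hδ.2 ▸ hθ
    _ ≤ δ.card := Ordinal.cof_le_card δ
    _ < lam := Cardinal.lt_ord.1 hδ.1

end Clubs

section Ideals

variable {ι : Type*} {J : Set ι → Prop} {f g h : ι → Ordinal.{0}}

theorem LtJ.trans_le (hJ : IsIdealOn J) (hfg : LtJ J f g) (hgh : ∀ i, g i ≤ h i) : LtJ J f h :=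
  hJ.mono (t := {i | ¬ f i < g i}) (fun i hi hlt => hi (hlt.trans_le (hgh i))) hfg

theorem LtJ.trans (hJ : IsIdealOn J) (hfg : LtJ J f g) (hgh : LtJ J g h) : LtJ J f h := by
  refine hJ.mono (fun i hi => ?_) (hJ.union_mem hfg hgh)
  by_contra hnot
  simp only [mem_union, mem_ofPred_eq, not_or, not_not] at hi hnot
  exact hi (hnot.1.trans hnot.2)

theorem LtJ.congr_left (hJ : IsIdealOn J) {f' : ι → Ordinal.{0}} (hf : LtJ J f h)
    (hff' : J {i | f i ≠ f' i}) : LtJ J f' h := by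
  refine hJ.mono (fun i hi => ?_) (hJ.union_mem hff' hf)
  by_cases he : f i = f' i
  · exact Or.inr (show ¬ f i < h i from he ▸ hi)
  · exact Or.inl he

end Ideals

section Witness

variable {ι : Type 1} {J : Set ι → Prop} {lamb : ι → Cardinal.{0}} {lam : Cardinal.{0}}
  {f : Ordinal.{0} → ι → Ordinal.{0}}

theorem IsPcfWitness.exists_gt_ltJ (hJ : IsIdealOn J) (hlam : lam.IsRegular)
    (hwit : IsPcfWitness J lamb lam f) {g : ι → Ordinal} (hg : ∀ i, g i < (lamb i).ord)
    {ζ : Ordinal} (hζ : ζ < lam.ord) : ∃ y < lam.ord, ζ < y ∧ LtJ J g (f y) := by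
  obtain ⟨c, hc, hgc⟩ := hwit.2.2 g hg
  have hy : max ζ c + 1 < lam.ord :=
    (Cardinal.isSuccLimit_ord hlam.aleph0_le).add_one_lt (max_lt hζ hc)
  exact ⟨max ζ c + 1, hy, (le_max_left _ _).trans_lt (lt_add_one _),
    hgc.trans hJ (hwit.2.1 c _ ((le_max_right _ _).trans_lt (lt_add_one _)) hy)⟩

theorem IsPcfWitness.exists_strictMonoOn_ltJ (hJ : IsIdealOn J) (hlam : lam.IsRegular)
    (hwit : IsPcfWitness J lamb lam f) (F : (Ordinal → Ordinal) → Ordinal → ι → Ordinal)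
    (hF : ∀ γ γ' b, (∀ b' < b, γ b' = γ' b') → F γ b = F γ' b)
    (hFprod : ∀ γ b i, F γ b i < (lamb i).ord) :
    ∃ γ : Ordinal → Ordinal, StrictMonoOn γ (Iio lam.ord) ∧
      ∀ b < lam.ord, γ b < lam.ord ∧ LtJ J (F γ b) (f (γ b)) := by
  let γ : Ordinal → Ordinal := Ordinal.lt_wf.fix fun b rec =>
    sInf {y | y < lam.ord ∧ (∀ b' (h : b' < b), rec b' h < y) ∧
      LtJ J (F (fun b' => if h : b' < b then rec b' h else 0) b) (f y)}
  let P : Ordinal → Ordinal → Prop := fun b y =>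
    y < lam.ord ∧ (∀ b' < b, γ b' < y) ∧ LtJ J (F γ b) (f y)
  have hγ : ∀ b, γ b = sInf {y | P b y} := by
    intro b
    rw [show γ b = _ from Ordinal.lt_wf.fix_eq _ b, hF _ γ b fun b' hb' => dif_pos hb']
  have key : ∀ b < lam.ord, P b (γ b) := by
    intro b
    induction b using WellFoundedLT.induction with
    | _ b IH =>
      intro hb
      obtain ⟨y, hy, hζy, hgy⟩ := hwit.exists_gt_ltJ hJ hlam (hFprod γ b)
        (Ordinal.sSup_image_Iio_lt_ord (g := γ) hlam (Cardinal.lt_ord.1 hb) fun b' hb' =>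
          (IH b' hb' (hb'.trans hb)).1)
      rw [hγ b]
      refine csInf_mem (s := {y | P b y}) ⟨y, hy, fun b' hb' => ?_, hgy⟩
      exact (le_csSup Ordinal.bddAbove_of_small (mem_image_of_mem γ (mem_Iio.2 hb'))).trans_lt hζy
  refine ⟨γ, fun b' _ b hb h => ?_, fun b hb => ?_⟩
  · obtain ⟨-, hmono, -⟩ := key b hb
    exact hmono b' h
  · obtain ⟨hlt, -, hJlt⟩ := key b hb
    exact ⟨hlt, hJlt⟩

end Witness

section TreeRank

variable {a : Ordinal.{0} → Set Ordinal.{0}}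

/-- The rank of `b` for the relation `β ∈ a b`; it is only meaningful when `a b ⊆ Iio b`. -/
def treeRank (a : Ordinal.{0} → Set Ordinal.{0}) : Ordinal.{0} → Ordinal.{0} :=
  Ordinal.lt_wf.fix fun b rank => sSup ((fun β => if h : β < b then rank β h + 1 else 0) '' a b)

theorem treeRank_eq {b : Ordinal} (hab : a b ⊆ Iio b) :
    treeRank a b = sSup ((fun β => treeRank a β + 1) '' a b) := by
  rw [treeRank, Ordinal.lt_wf.fix_eq]
  exact congrArg sSup (image_congr fun β hβ => dif_pos (hab hβ))

theorem treeRank_of_branch (ha : ∀ b, a b ⊆ Iio b) {e : Ordinal → Ordinal} {θ : Ordinal}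
    (hea : ∀ ε < θ, a (e ε) = e '' Iio ε) : ∀ ε < θ, treeRank a (e ε) = ε := by
  intro ε
  induction ε using WellFoundedLT.induction with
  | _ ε IH =>
    intro hε
    have hrank : (fun ξ => treeRank a (e ξ) + 1) '' Iio ε = (· + 1) '' Iio ε :=
      image_congr fun ξ hξ => by rw [IH ξ hξ (hξ.trans hε)]
    rw [treeRank_eq (ha _), hea ε hε, image_image, hrank, Ordinal.sSup_image_Iio_add_one]

variable {ι : Type*} {lamb : ι → Cardinal.{0}}

/-- `g_b` for the sequence `γ`, before being cut down into `∏ λ_i`. -/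
def treeLevel (f : Ordinal.{0} → ι → Ordinal.{0}) (a : Ordinal.{0} → Set Ordinal.{0})
    (γ : Ordinal.{0} → Ordinal.{0}) (b : Ordinal.{0}) (i : ι) : Ordinal.{0} :=
  sSup ((fun β => f (γ β) i + 1) '' a b) + treeRank a b

theorem treeLevel_congr (f : Ordinal.{0} → ι → Ordinal.{0}) (ha : ∀ b, a b ⊆ Iio b)
    {γ γ' : Ordinal → Ordinal} {b : Ordinal} (h : ∀ b' < b, γ b' = γ' b') :
    treeLevel f a γ b = treeLevel f a γ' b := by
  funext i
  simp only [treeLevel]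
  congr 2
  exact image_congr fun β hβ => by rw [h β (ha b hβ)]

theorem lt_treeLevel (f : Ordinal.{0} → ι → Ordinal.{0}) (γ : Ordinal → Ordinal)
    {b β : Ordinal} (hab : a b ⊆ Iio b) (hβ : β ∈ a b) (i : ι) :
    f (γ β) i < treeLevel f a γ b i :=
  calc f (γ β) i < f (γ β) i + 1 := lt_add_one _
    _ ≤ sSup ((fun β => f (γ β) i + 1) '' a b) :=
      le_csSup ((Ordinal.bddAbove_of_small (s := (fun β => f (γ β) i + 1) '' Iio b)).mono
        (image_mono hab)) (mem_image_of_mem _ hβ)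
    _ ≤ treeLevel f a γ b i := le_self_add

theorem treeLevel_of_branch (f : Ordinal.{0} → ι → Ordinal.{0}) (γ : Ordinal → Ordinal)
    (ha : ∀ b, a b ⊆ Iio b) {e : Ordinal → Ordinal} {θ : Ordinal}
    (hea : ∀ ε < θ, a (e ε) = e '' Iio ε) {ε : Ordinal} (hε : ε < θ) (i : ι) :
    treeLevel f a γ (e ε) i = sSup ((fun ξ => f (γ (e ξ)) i + 1) '' Iio ε) + ε := by
  rw [treeLevel, hea ε hε, image_image, treeRank_of_branch ha hea ε hε]

def capBelow (lamb : ι → Cardinal.{0}) (g : ι → Ordinal.{0}) (i : ι) : Ordinal.{0} :=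
  if g i < (lamb i).ord then g i else 0

theorem capBelow_lt_ord (hlamb : ∀ i, (lamb i).IsRegular) (g : ι → Ordinal) (i : ι) :
    capBelow lamb g i < (lamb i).ord := by
  unfold capBelow
  split_ifs with h
  · exact h
  · exact Cardinal.ord_pos.2 (hlamb i).pos

theorem capBelow_of_lt {g : ι → Ordinal} {i : ι} (h : g i < (lamb i).ord) :
    capBelow lamb g i = g i :=
  if_pos h

end TreeRank

theorem goodPoint_of_branch {ι : Type 1} {J : Set ι → Prop} {lamb : ι → Cardinal.{0}}
    {lam σ : Cardinal.{0}} {f : Ordinal.{0} → ι → Ordinal.{0}} (hJ : IsIdealOn J)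
    (hwit : IsPcfWitness J lamb lam f) (hlamb : ∀ i, (lamb i).IsRegular) (hσ : ℵ₀ ≤ σ)
    (hσlamb : J {i | lamb i < σ}) {a : Ordinal → Set Ordinal} (ha : ∀ b, a b ⊆ Iio b)
    {γ : Ordinal → Ordinal} (hγmono : StrictMonoOn γ (Iio lam.ord))
    (hγ : ∀ b < lam.ord,
      γ b < lam.ord ∧ LtJ J (capBelow lamb (treeLevel f a γ b)) (f (γ b)))
    {δ : Ordinal} (hδ : δ < lam.ord) (hδcof : δ.cof = σ) (hδγ : ∀ b < δ, γ b < δ)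
    {e : Ordinal → Ordinal} (heδ : ∀ ε < σ.ord, e ε < δ)
    (hecof : ∀ β < δ, ∃ ε < σ.ord, β < e ε) (hea : ∀ ε < σ.ord, a (e ε) = e '' Iio ε) :
    GoodPoint J f δ := by
  have hγe : ∀ ε < σ.ord, γ (e ε) < lam.ord := fun ε hε => (hγ _ ((heδ ε hε).trans hδ)).1
  unfold GoodPoint
  rw [hδcof]
  refine ⟨fun i ε => treeLevel f a γ (e ε) i, fun i ε hε ε' hε' h => ?_,
    fun α hα => ?_, fun ε hε => ⟨γ (e ε), hδγ _ (heδ ε hε), ?_⟩⟩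
  · simp only [treeLevel_of_branch f γ ha hea hε, treeLevel_of_branch f γ ha hea hε']
    exact Ordinal.strictMono_sSup_image_Iio_add _ h
  · obtain ⟨ξ, hξ, hαξ⟩ := hecof α hα
    have hξ' : ξ + 1 < σ.ord := (Cardinal.isSuccLimit_ord hσ).add_one_lt hξ
    have heξ : e ξ ∈ a (e (ξ + 1)) := by
      rw [hea _ hξ']
      exact mem_image_of_mem e (lt_add_one ξ)
    have hαγ : α < γ (e ξ) := hαξ.trans_le (hγmono.le_apply_of_lt ((heδ ξ hξ).trans hδ))
    exact ⟨ξ + 1, hξ', (hwit.2.1 α _ hαγ (hγe ξ hξ)).trans_le hJ fun i =>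
      (lt_treeLevel f γ (ha _) heξ i).le⟩
  · refine (hγ _ ((heδ ε hε).trans hδ)).2.congr_left hJ (hJ.mono (fun i hi => ?_) hσlamb)
    by_contra! hσi
    rw [mem_ofPred_eq, not_lt] at hσi
    refine hi (capBelow_of_lt ?_)
    rw [treeLevel_of_branch f γ ha hea hε]
    have hεi : ε < (lamb i).ord := hε.trans_le (Cardinal.ord_le_ord.2 hσi)
    refine Ordinal.isPrincipal_add_ord (hlamb i).aleph0_le
      (Ordinal.sSup_image_Iio_lt_ord (hlamb i) (Cardinal.lt_ord.1 hεi) fun ξ hξ => ?_) hεi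
    exact (Cardinal.isSuccLimit_ord (hlamb i).aleph0_le).add_one_lt
      (hwit.1 _ (hγe ξ (hξ.trans hε)) i)

theorem statement19_general (κ sigma lam μ : Cardinal.{0}) (J : Set (KIdx κ) → Prop)
    (lamb : KIdx κ → Cardinal.{0}) (f : Ordinal → KIdx κ → Ordinal)
    (hJ : IsIdealOn J) (hlamb : ∀ i, (lamb i).IsRegular ∧ κ < lamb i)
    (hlam : lam.IsRegular) (hwit : IsPcfWitness J lamb lam f)
    (hsigma : sigma.IsRegular) (hσμ : sigma < μ)
    (hμ : IsLimInfJ J lamb μ)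
    (S : Set Ordinal) (hS : InIcheck sigma lam S) :
    ∃ E : Set Ordinal, IsClubIn E lam.ord ∧ ∀ δ ∈ E ∩ S, GoodPoint J f δ := by
  obtain ⟨hSσ, a, E₁, ha, -, -, hE₁, hbranch⟩ := hS
  by_cases hw : ℵ₀ < lam
  swap
  · exact ⟨E₁, hE₁, fun δ hδ => absurd (aleph0_lt_of_mem_Scof hsigma.aleph0_le (hSσ hδ.2)) hw⟩
  obtain ⟨γ, hγmono, hγ⟩ := hwit.exists_strictMonoOn_ltJ hJ hlam
    (fun γ b => capBelow lamb (treeLevel f a γ b))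
    (fun γ γ' b h => by rw [treeLevel_congr f ha h])
    (fun γ b => capBelow_lt_ord (fun i => (hlamb i).1) _)
  refine ⟨E₁ ∩ {δ | δ < lam.ord ∧ ∀ b < δ, γ b < δ},
    hE₁.inter hlam hw (isClubIn_closurePoints hlam hw fun b hb => (hγ b hb).1), ?_⟩
  rintro δ ⟨⟨hδE₁, -, hδγ⟩, hδS⟩
  obtain ⟨e, -, heδ, hecof, hea⟩ := hbranch δ ⟨hδS, hδE₁⟩
  exact goodPoint_of_branch hJ hwit (fun i => (hlamb i).1) hsigma.aleph0_le (hμ.2 sigma hσμ)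
    ha hγmono hγ (hSσ hδS).1 (hSσ hδS).2 hδγ heδ hecof hea

/-- for a pcf-case witness `f̄` and `S ∈ Ǐ_σ[λ]` with
`κ < σ < lim inf_J(λ̄)`, there is a club `E` of `λ` with `E ∩ S ⊆ S_gd[f̄,J]`. -/
theorem statement19 (κ sigma lam μ : Cardinal.{0}) (J : Set (KIdx κ) → Prop)
    (lamb : KIdx κ → Cardinal.{0}) (f : Ordinal → KIdx κ → Ordinal)
    (hJ : IsIdealOn J) (hlamb : ∀ i, (lamb i).IsRegular ∧ κ < lamb i)
    (hlam : lam.IsRegular) (hwit : IsPcfWitness J lamb lam f)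
    (hsigma : sigma.IsRegular) (hκσ : κ < sigma) (hσμ : sigma < μ)
    (hμ : IsLimInfJ J lamb μ)
    (S : Set Ordinal) (hS : InIcheck sigma lam S) :
    ∃ E : Set Ordinal, IsClubIn E lam.ord ∧ ∀ δ ∈ E ∩ S, GoodPoint J f δ :=
  statement19_general κ sigma lam μ J lamb f hJ hlamb hlam hwit hsigma hσμ hμ S hS

end PaperDefs
end
end
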